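/- arXiv:2005.00566 — 9 statements merged into one kernel-verified Lean document; each statement's English description precedes it below -/
import Mathlib

section
/- If p is a real polynomial of degree at most d satisfying 0 ≤ p(x) ≤ 1 for all x in [0,1], then |p''(0)| ≤ (2/3)·d²·(d²−1). -/
open Finset
open scoped Classical

namespace BF

noncomputable section

/-- flip the bits of `x` belonging to `B`. -/
def flipS {n : ℕ} (x : Fin n → Bool) (B : Finset (Fin n)) : Fin n → Bool :=
  fun i => if i ∈ B then !(x i) else x i

/-- flip the `i`-th bit of `x`. -/
def flip1 {n : ℕ} (x : Fin n → Bool) (i : Fin n) : Fin n → Bool :=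
  fun j => if j = i then !(x j) else x j

/-- real value of a boolean. -/
def bval (b : Bool) : ℝ := if b then 1 else 0

/-- coefficient of the monomial `∏_{i ∈ S} x_i` in the unique multilinear
real polynomial expansion of `f` (Möbius inversion over the subcube lattice). -/
def coeffS {n : ℕ} (f : (Fin n → Bool) → ℝ) (S : Finset (Fin n)) : ℝ :=
  ∑ T ∈ S.powerset, (-1 : ℝ) ^ (S.card - T.card) * f (fun i => decide (i ∈ T))

/-- degree of the multilinear expansion of a real-valued function on the cube. -/
def degF {n : ℕ} (f : (Fin n → Bool) → ℝ) : ℕ :=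
  (Finset.univ.filter fun S : Finset (Fin n) => coeffS f S ≠ 0).sup Finset.card

/-- degree of a boolean function. -/
def degB {n : ℕ} (f : (Fin n → Bool) → Bool) : ℕ := degF (fun x => bval (f x))

/-- block sensitivity of `f` at `x`. -/
def bsAt {n : ℕ} (f : (Fin n → Bool) → Bool) (x : Fin n → Bool) : ℕ :=
  (Finset.univ.filter fun 𝓑 : Finset (Finset (Fin n)) =>
      (∀ B ∈ 𝓑, f (flipS x B) ≠ f x) ∧
      ∀ A ∈ 𝓑, ∀ B ∈ 𝓑, A ≠ B → Disjoint A B).sup Finset.card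

/-- block sensitivity of `f`. -/
def bs {n : ℕ} (f : (Fin n → Bool) → Bool) : ℕ := Finset.univ.sup (bsAt f)

/-- sensitivity of `f` at `x`. -/
def sx {n : ℕ} (f : (Fin n → Bool) → Bool) (x : Fin n → Bool) : ℕ :=
  (Finset.univ.filter fun i => f (flip1 x i) ≠ f x).card

/-- (maximum) sensitivity of `f`. -/
def sens {n : ℕ} (f : (Fin n → Bool) → Bool) : ℕ := Finset.univ.sup (sx f)

/-- coordinate `i` is relevant for `f`. -/
def Rel {n : ℕ} (i : Fin n) (f : (Fin n → Bool) → Bool) : Prop :=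
  ∃ x, f (flip1 x i) ≠ f x

/-- the set of relevant coordinates of `f`. -/
def relSet {n : ℕ} (f : (Fin n → Bool) → Bool) : Finset (Fin n) :=
  Finset.univ.filter fun i => Rel i f

/-- the number of relevant variables `n(f)`. -/
def nrel {n : ℕ} (f : (Fin n → Bool) → Bool) : ℕ := (relSet f).card

/-- influence of coordinate `i` on `f` (uniform distribution). -/
def infl {n : ℕ} (f : (Fin n → Bool) → Bool) (i : Fin n) : ℝ :=
  ((Finset.univ.filter fun x : Fin n → Bool => f x ≠ f (flip1 x i)).card : ℝ) / 2 ^ n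

/-- total influence `I[f]`. -/
def totalInf {n : ℕ} (f : (Fin n → Bool) → Bool) : ℝ := ∑ i, infl f i

/-- restriction of `f` fixing the coordinates in `H` according to `α`
(viewed as a function on the full cube not depending on the coordinates in `H`). -/
def restrict {n : ℕ} (f : (Fin n → Bool) → Bool) (H : Finset (Fin n))
    (α : Fin n → Bool) : (Fin n → Bool) → Bool :=
  fun x => f (fun i => if i ∈ H then α i else x i)

/-- certificate complexity of `f` at `x`. -/
def certAt {n : ℕ} (f : (Fin n → Bool) → Bool) (x : Fin n → Bool) : ℕ :=
  sInf {k | ∃ S : Finset (Fin n), S.card = k ∧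
    ∀ y, (∀ i ∈ S, y i = x i) → f y = f x}

/-- certificate complexity `C(f)`. -/
def certC {n : ℕ} (f : (Fin n → Bool) → Bool) : ℕ := Finset.univ.sup (certAt f)

/-- `f` is in standard form: `f(0) = 0` and `f(e_i) = 1` for every basis vector. -/
def stdForm {b : ℕ} (f : (Fin b → Bool) → Bool) : Prop :=
  f (fun _ => false) = false ∧ ∀ i : Fin b, f (fun j => decide (j = i)) = true

end

end BF

open BF


namespace MKV

open Polynomial Real Polynomial.Chebyshev Finset


lemma deriv_shift (r : ℝ) (g : ℝ[X]) (m : ℕ) :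
    derivative^[m+1] ((X - C r) * g) =
      (X - C r) * derivative^[m+1] g + C ((m : ℝ)+1) * derivative^[m] g := by
  induction m with
  | zero =>
    simp [derivative_mul]
    ring
  | succ m ih =>
    rw [Function.iterate_succ_apply', ih]
    simp [derivative_mul, Function.iterate_succ_apply']
    push_cast
    ring

lemma nodal_iter_deriv_nonneg {ι : Type*} [DecidableEq ι] (c : ℝ) (t : Finset ι)
    (v : ι → ℝ) (hv : ∀ i ∈ t, v i ≤ c) : ∀ m, 0 ≤ (derivative^[m] (Lagrange.nodal t v)).eval c := by
  induction t using Finset.induction_on with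
  | empty =>
    intro m
    cases m with
    | zero => simp [Lagrange.nodal_empty]
    | succ m => simp [Lagrange.nodal_empty, iterate_derivative_one (Nat.succ_pos m)]
  | @insert a t ha ih =>
    intro m
    have hvt : ∀ i ∈ t, v i ≤ c := fun i hi => hv i (Finset.mem_insert_of_mem hi)
    have hva : v a ≤ c := hv a (Finset.mem_insert_self a t)
    rw [Lagrange.nodal_insert_eq_nodal ha]
    cases m with
    | zero =>
      simpa using mul_nonneg (by linarith) (by simpa using ih hvt 0)
    | succ m =>
      rw [deriv_shift]
      simp only [eval_add, eval_mul, eval_sub, eval_X, eval_C]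
      have h1 := ih hvt (m+1)
      have h2 := ih hvt m
      nlinarith



lemma U_eval_one : ∀ n : ℕ, (U ℝ (n:ℤ)).eval 1 = n+1 := by
  have key : ∀ n : ℕ, (U ℝ (n:ℤ)).eval 1 = n+1 ∧ (U ℝ ((n:ℤ)+1)).eval 1 = n+2 := by
    intro n
    induction n with
    | zero => norm_num [U_zero, U_one]
    | succ n ih =>
      refine ⟨by push_cast; rw [ih.2]; ring, ?_⟩
      have h := U_add_two ℝ (n:ℤ)
      have := congrArg (eval (1:ℝ)) h
      simp only [eval_sub, eval_mul, eval_ofNat, eval_X] at this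
      push_cast
      push_cast at this ih ⊢
      rw [show ((n:ℤ)+1+1 : ℤ) = (n:ℤ)+2 by ring, this, ih.1, ih.2]
      ring
  exact fun n => (key n).1

lemma T_eval_one (n : ℤ) : (T ℝ n).eval 1 = 1 := by
  have := Polynomial.Chebyshev.T_real_cos 0 n
  simpa using this

lemma natDegree_T_le : ∀ n : ℕ, (T ℝ (n:ℤ)).natDegree ≤ n := by
  have key : ∀ n : ℕ, (T ℝ (n:ℤ)).natDegree ≤ n ∧ (T ℝ ((n:ℤ)+1)).natDegree ≤ n+1 := by
    intro n
    induction n with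
    | zero => constructor <;> simp [T_zero, T_one, natDegree_X_le]
    | succ n ih =>
      refine ⟨by push_cast; exact ih.2, ?_⟩
      have h := T_add_two ℝ (n:ℤ)
      push_cast
      rw [show ((n:ℤ)+1+1 : ℤ) = (n:ℤ)+2 by ring, h]
      refine le_trans (natDegree_sub_le _ _) ?_
      simp only [max_le_iff]
      constructor
      · refine le_trans (natDegree_mul_le) ?_
        have h2 : (2 * X : ℝ[X]).natDegree ≤ 1 := by
          refine le_trans (natDegree_mul_le) ?_
          simp [natDegree_X_le]
        omega
      · omega
  exact fun n => (key n).1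

lemma dU_eval_one (n : ℕ) :
    (derivative (U ℝ (n:ℤ))).eval 1 = (n:ℝ)*((n:ℝ)+1)*((n:ℝ)+2)/3 := by
  have h := congrArg derivative (add_one_mul_T_eq_poly_in_U (R := ℝ) (n:ℤ))
  have hT : derivative (T ℝ ((n:ℤ)+1)) = ((n:ℤ)+1 : ℝ[X]) * U ℝ (n:ℤ) := by
    have := T_derivative_eq_U (R := ℝ) ((n:ℤ)+1)
    simpa using this
  simp only [derivative_mul, derivative_sub, derivative_add, derivative_one, derivative_X, derivative_X_pow,
    derivative_intCast, hT, zero_add, add_zero, zero_mul, mul_zero] at h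
  have h1 := congrArg (eval (1:ℝ)) h
  simp only [eval_add, eval_mul, eval_sub, eval_one, eval_X, eval_intCast, eval_pow,
    eval_zero, eval_C, zero_mul, add_zero, zero_add, mul_zero, one_mul, mul_one, one_pow, eval_natCast] at h1
  have hU1 : (U ℝ (n:ℤ)).eval 1 = (n:ℝ)+1 := U_eval_one n
  rw [hU1] at h1
  push_cast at h1 ⊢
  nlinarith [h1]

lemma ddT_eval_one (d : ℕ) (hd : 1 ≤ d) :
    (derivative (derivative (T ℝ (d:ℤ)))).eval 1 = (d:ℝ)^2*((d:ℝ)^2-1)/3 := by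
  have hT : derivative (T ℝ (d:ℤ)) = ((d:ℤ) : ℝ[X]) * U ℝ ((d:ℤ)-1) := T_derivative_eq_U (R := ℝ) (d:ℤ)
  have hcast : ((d:ℤ)-1) = ((d-1 : ℕ) : ℤ) := by omega
  rw [hT, hcast, derivative_mul, derivative_intCast]
  have := dU_eval_one (d-1)
  simp only [eval_add, eval_mul, eval_intCast, zero_mul, zero_add, this]
  have hd1 : ((d-1 : ℕ) : ℝ) = (d:ℝ) - 1 := by
    have : (1:ℝ) ≤ d := by exact_mod_cast hd
    push_cast [Nat.cast_sub hd]; ring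
  rw [hd1]
  push_cast
  ring






theorem markov_endpoint (d : ℕ) (hd : 1 ≤ d) (g : ℝ[X]) (hdeg : g.natDegree ≤ d)
    (hg : ∀ y ∈ Set.Icc (-1:ℝ) 1, |g.eval y| ≤ 1) :
    |(derivative (derivative g)).eval 1| ≤ (d:ℝ)^2*((d:ℝ)^2-1)/3 := by
  classical
  have hdR : (0:ℝ) < d := by exact_mod_cast hd
  set s : Finset (Fin (d+1)) := Finset.univ with hs
  set v : Fin (d+1) → ℝ := fun j => Real.cos (j * π / d) with hv
  have hcard : #s = d + 1 := by simp [hs]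
  have harg : ∀ j : Fin (d+1), (j:ℝ) * π / d ∈ Set.Icc 0 π := by
    intro j
    constructor
    · positivity
    · rw [div_le_iff₀ hdR]
      have hj : (j:ℝ) ≤ d := by exact_mod_cast Nat.lt_succ_iff.mp j.isLt
      nlinarith [Real.pi_pos]
  have hmono : ∀ j k : Fin (d+1), j < k → v k < v j := by
    intro j k hjk
    apply Real.strictAntiOn_cos (harg j) (harg k)
    have h1 : (j:ℝ) < k := by exact_mod_cast hjk
    have := Real.pi_pos
    apply div_lt_div_of_pos_right ?_ hdR
    nlinarith
  have hinj : Set.InjOn v ↑s := by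
    intro j _ k _ hjk
    by_contra hne
    rcases lt_or_gt_of_ne hne with h | h
    · exact absurd hjk (ne_of_gt (hmono j k h))
    · exact absurd hjk (ne_of_lt (hmono k j h))
  have hvle : ∀ j : Fin (d+1), v j ≤ 1 := fun j => Real.cos_le_one _
  have hvge : ∀ j : Fin (d+1), -1 ≤ v j := fun j => Real.neg_one_le_cos _
  -- the second-derivative-at-1 weights
  set B : Fin (d+1) → ℝ :=
    fun j => (derivative (derivative (Lagrange.basis s v j))).eval 1 with hB
  -- expansion of the second derivative at 1
  have hexp : ∀ f : ℝ[X], f.degree < (d+1:ℕ) →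
      (derivative (derivative f)).eval 1 = ∑ j ∈ s, f.eval (v j) * B j := by
    intro f hf
    have hflt : f.degree < (#s : ℕ) := by rwa [hcard]
    conv_lhs => rw [Lagrange.eq_interpolate hinj hflt, Lagrange.interpolate_apply]
    rw [derivative_sum, derivative_sum, eval_finset_sum]
    refine Finset.sum_congr rfl fun j hj => ?_
    rw [derivative_C_mul, derivative_C_mul, eval_mul, eval_C]
  -- basis in terms of nodal
  have hbasis : ∀ j : Fin (d+1), Lagrange.basis s v j =
      C (Lagrange.nodalWeight s v j) * Lagrange.nodal (s.erase j) v := by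
    intro j
    rw [Lagrange.basis_eq_prod_sub_inv_mul_nodal_div (mem_univ j),
      ← Lagrange.nodal_erase_eq_nodal_div (mem_univ j)]
  -- sign of the weights
  have hwsign : ∀ j : Fin (d+1), 0 ≤ (-1:ℝ)^(j:ℕ) * Lagrange.nodalWeight s v j := by
    intro j
    have hpow : (-1:ℝ)^(j:ℕ) = ∏ k ∈ s.erase j, (if k < j then (-1:ℝ) else 1) := by
      rw [Finset.prod_ite, Finset.prod_const, Finset.prod_const, one_pow, mul_one]
      congr 1
      have : (s.erase j).filter (· < j) = Finset.Iio j := by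
        ext k
        simp only [mem_filter, mem_erase, mem_univ, Finset.mem_Iio, hs, true_and,
          and_iff_right_iff_imp]
        exact fun h => ⟨ne_of_lt h, trivial⟩
      rw [this, Fin.card_Iio]
    rw [hpow, Lagrange.nodalWeight, ← Finset.prod_mul_distrib]
    refine Finset.prod_nonneg fun k hk => ?_
    rcases mem_erase.mp hk with ⟨hkj, -⟩
    rcases lt_or_gt_of_ne hkj with h | h
    · have : v j < v k := hmono k j h
      rw [if_pos h]
      have h2 : (v j - v k)⁻¹ < 0 := inv_lt_zero.mpr (by linarith)
      linarith
    · have : v k < v j := hmono j k h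
      rw [if_neg (not_lt.mpr (le_of_lt h)), one_mul]
      have h2 : 0 < v j - v k := by linarith
      positivity
  -- |B j| = (-1)^j * B j
  have hBabs : ∀ j : Fin (d+1), |B j| = (-1:ℝ)^(j:ℕ) * B j := by
    intro j
    have hM : 0 ≤ (derivative (derivative (Lagrange.nodal (s.erase j) v))).eval 1 := by
      have := nodal_iter_deriv_nonneg 1 (s.erase j) v
        (fun k _ => hvle k) 2
      simpa [Function.iterate_succ_apply'] using this
    have hBj : B j = Lagrange.nodalWeight s v j *
        (derivative (derivative (Lagrange.nodal (s.erase j) v))).eval 1 := by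
      show (derivative (derivative (Lagrange.basis s v j))).eval 1 = _
      rw [hbasis j, derivative_C_mul, derivative_C_mul, eval_mul, eval_C]
    have hnn : 0 ≤ (-1:ℝ)^(j:ℕ) * B j := by
      rw [hBj, ← mul_assoc]
      exact mul_nonneg (hwsign j) hM
    have : |B j| = |(-1:ℝ)^(j:ℕ) * B j| := by
      rw [abs_mul, abs_pow, abs_neg, abs_one, one_pow, one_mul]
    rw [this, abs_of_nonneg hnn]
  -- Chebyshev evaluation at nodes
  have hTnode : ∀ j ∈ s, (T ℝ (d:ℤ)).eval (v j) = (-1:ℝ)^(j:ℕ) := by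
    intro j _
    have h1 : (T ℝ (d:ℤ)).eval (Real.cos ((j:ℝ) * π / d)) =
        Real.cos ((d:ℤ) * ((j:ℝ) * π / d)) := Polynomial.Chebyshev.T_real_cos _ _
    rw [hv]
    simp only []
    rw [h1]
    have : ((d:ℤ):ℝ) * ((j:ℝ) * π / d) = (j:ℕ) * π := by
      push_cast
      field_simp
    rw [this]
    have := Real.cos_nat_mul_pi_sub 0 (j:ℕ)
    simpa using this
  have hTdeg : (T ℝ (d:ℤ)).degree < ((d+1:ℕ):WithBot ℕ) := by
    refine lt_of_le_of_lt (Polynomial.degree_le_natDegree) ?_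
    exact_mod_cast Nat.lt_succ_of_le (natDegree_T_le d)
  -- the sum of |B j| equals T''(1)
  have hsum : ∑ j ∈ s, (-1:ℝ)^(j:ℕ) * B j = (d:ℝ)^2*((d:ℝ)^2-1)/3 := by
    have := hexp (T ℝ (d:ℤ)) hTdeg
    rw [ddT_eval_one d hd] at this
    rw [this]
    exact Finset.sum_congr rfl fun j hj => by rw [hTnode j hj]
  -- final estimate
  have hgdeg : g.degree < ((d+1:ℕ):WithBot ℕ) := by
    refine lt_of_le_of_lt (Polynomial.degree_le_natDegree) ?_
    exact_mod_cast Nat.lt_succ_of_le hdeg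
  rw [hexp g hgdeg]
  calc |∑ j ∈ s, g.eval (v j) * B j| ≤ ∑ j ∈ s, |g.eval (v j) * B j| :=
        Finset.abs_sum_le_sum_abs _ _
    _ ≤ ∑ j ∈ s, |B j| := by
        refine Finset.sum_le_sum fun j _ => ?_
        rw [abs_mul]
        have h1 : |g.eval (v j)| ≤ 1 := hg _ ⟨hvge j, hvle j⟩
        nlinarith [abs_nonneg (B j), abs_nonneg (g.eval (v j))]
    _ = (d:ℝ)^2*((d:ℝ)^2-1)/3 := by
        rw [← hsum]
        exact Finset.sum_congr rfl fun j _ => hBabs j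


end MKV

open Polynomial Real in
/-- V. A. Markov-type bound: if `p` has degree at most `d` and
`0 ≤ p(x) ≤ 1` on `[0,1]`, then `|p''(0)| ≤ (2/3)·d²·(d²−1)`. -/
theorem stmt0 (d : ℕ) (p : Polynomial ℝ) (hdeg : p.natDegree ≤ d)
    (hp : ∀ x ∈ Set.Icc (0 : ℝ) 1, 0 ≤ p.eval x ∧ p.eval x ≤ 1) :
    |(Polynomial.derivative (Polynomial.derivative p)).eval 0| ≤
      2 / 3 * (d : ℝ) ^ 2 * ((d : ℝ) ^ 2 - 1) := by
  rcases le_or_gt d 1 with hd | hd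
  · have hp1 : p.natDegree ≤ 1 := le_trans hdeg hd
    have h1 : (derivative p).natDegree = 0 := by
      have := Polynomial.natDegree_derivative_le p
      omega
    have h2 : derivative (derivative p) = 0 := by
      rw [Polynomial.eq_C_of_natDegree_le_zero (le_of_eq h1)]
      simp
    rw [h2]
    simp only [Polynomial.eval_zero, abs_zero]
    interval_cases d <;> norm_num
  · set a : ℝ[X] := Polynomial.C (1/2) - Polynomial.C (1/2) * Polynomial.X with ha
    set g : ℝ[X] := Polynomial.C 2 * (p.comp a) - 1 with hg
    have hda : a.natDegree ≤ 1 := by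
      refine le_trans (Polynomial.natDegree_sub_le _ _) ?_
      simp only [Polynomial.natDegree_C, max_le_iff]
      exact ⟨by omega, le_trans (Polynomial.natDegree_C_mul_le _ _) Polynomial.natDegree_X_le⟩
    have hgd : g.natDegree ≤ d := by
      refine le_trans (Polynomial.natDegree_sub_le _ _) ?_
      simp only [Polynomial.natDegree_one, max_le_iff]
      refine ⟨le_trans (Polynomial.natDegree_C_mul_le _ _) ?_, by omega⟩
      refine le_trans (Polynomial.natDegree_comp_le) ?_
      calc p.natDegree * a.natDegree ≤ p.natDegree * 1 := Nat.mul_le_mul_left _ hda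
        _ ≤ d := by omega
    have hgval : ∀ y ∈ Set.Icc (-1:ℝ) 1, |g.eval y| ≤ 1 := by
      intro y hy
      rcases hy with ⟨hy1, hy2⟩
      have hav : a.eval y = 1/2 - 1/2 * y := by simp [ha]
      have hmem : a.eval y ∈ Set.Icc (0:ℝ) 1 := by
        rw [hav]; constructor <;> [linarith; linarith]
      obtain ⟨hp0, hp1⟩ := hp _ hmem
      have : g.eval y = 2 * p.eval (a.eval y) - 1 := by
        simp [hg, Polynomial.eval_comp]
      rw [this, abs_le]
      constructor <;> linarith
    have hdd : derivative (derivative g) =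
        Polynomial.C (1/2) * (derivative (derivative p)).comp a := by
      have h1 : derivative g = Polynomial.C (-1) * (derivative p).comp a := by
        rw [hg, ha]
        simp [Polynomial.derivative_comp]
        rw [← mul_assoc, ← Polynomial.C_mul]
        norm_num
      rw [h1, ha]
      simp [Polynomial.derivative_comp]
    have heval : (derivative (derivative g)).eval 1 =
        (1/2) * (derivative (derivative p)).eval 0 := by
      rw [hdd]
      simp [Polynomial.eval_comp, ha]
    have hmain := MKV.markov_endpoint d (by omega) g hgd hgval
    rw [heval] at hmain
    rw [abs_mul, abs_of_nonneg (by norm_num : (0:ℝ) ≤ 1/2)] at hmain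
    linarith
end

section
/- If f : {0,1}^b → {0,1} is in standard form, and p_f(μ) is the univariate polynomial obtained by substituting x_i = μ for all i into the multilinear extension of f, then: (1) deg(p_f) ≤ deg(f); (2) 0 ≤ p_f(μ) ≤ 1 for all μ ∈ [0,1]; and (3) |p_f''(0)| ≥ b(b−1). -/
/-!
Exchanging the two sums in the Möbius expansion gives
`p_f(μ) = ∑_T f(1_T) μ^|T| (1 - μ)^(b - |T|)`, the expectation of `f` on independent
Bernoulli(μ) inputs, so `p_f` maps `[0, 1]` into `[0, 1]`. The coefficient of `μ²` in `p_f` is the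
sum over the `b.choose 2` pairs `{i, j}` of `f(e_i + e_j) - f(e_i) - f(e_j) + f(0) = f(e_i + e_j) - 2`,
each at most `-1`, and `p_f''(0)` is twice that coefficient.
-/

open Finset
open scoped Classical

open BF

/-- the univariate polynomial `p_f(μ)` obtained by substituting `x_i = μ` for all `i`
into the multilinear expansion of `f`. -/
noncomputable def pf {b : ℕ} (f : (Fin b → Bool) → Bool) : Polynomial ℝ :=
  ∑ S : Finset (Fin b),
    Polynomial.C (coeffS (fun x => bval (f x)) S) * Polynomial.X ^ S.card

open Finset Polynomial

namespace BF

lemma bval_true : bval true = 1 := rfl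

lemma bval_false : bval false = 0 := rfl

lemma bval_nonneg (x : Bool) : 0 ≤ bval x := by
  cases x <;> simp [bval]

lemma bval_le_one (x : Bool) : bval x ≤ 1 := by
  cases x <;> simp [bval]

theorem sum_superset_neg_one_pow_mul_pow {α : Type*} [Fintype α] [DecidableEq α]
    (T : Finset α) (μ : ℝ) :
    ∑ S with T ⊆ S, (-1 : ℝ) ^ (#S - #T) * μ ^ #S =
      μ ^ #T * (1 - μ) ^ (Fintype.card α - #T) := by
  have hreindex : ∑ S with T ⊆ S, (-1 : ℝ) ^ (#S - #T) * μ ^ #S =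
      ∑ U ∈ Tᶜ.powerset, μ ^ #T * ((-μ) ^ #U * 1 ^ (#Tᶜ - #U)) :=
    sum_nbij' (· \ T) (T ∪ ·)
      (fun S _ => by simp [subset_iff])
      (fun U _ => by simp)
      (fun S hS => union_sdiff_of_subset (mem_filter.mp hS).2)
      (fun U hU => union_sdiff_cancel_left
        (disjoint_left.mpr fun x hxT hxU => by simpa [hxT] using mem_powerset.mp hU hxU))
      (fun S hS => by
        have hTS := (mem_filter.mp hS).2
        rw [card_sdiff_of_subset hTS, one_pow, mul_one, neg_pow,
          ← pow_mul_pow_sub μ (card_le_card hTS)]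
        ring)
  rw [hreindex, ← mul_sum, sum_pow_mul_eq_add_pow, card_compl, neg_add_eq_sub]

theorem sum_coeffS_mul_pow {n : ℕ} (g : (Fin n → Bool) → ℝ) (μ : ℝ) :
    ∑ S, coeffS g S * μ ^ #S =
      ∑ T, g (fun i => decide (i ∈ T)) * (μ ^ #T * (1 - μ) ^ (n - #T)) := by
  simp only [coeffS, sum_mul]
  rw [sum_comm' (t' := univ) (s' := fun T => univ.filter (T ⊆ ·)) (by simp)]
  refine sum_congr rfl fun T _ => ?_
  have hsuperset := sum_superset_neg_one_pow_mul_pow T μ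
  rw [Fintype.card_fin] at hsuperset
  rw [← hsuperset, mul_sum]
  exact sum_congr rfl fun S _ => by ring

theorem eval_pf {b : ℕ} (f : (Fin b → Bool) → Bool) (μ : ℝ) :
    (pf f).eval μ =
      ∑ T, bval (f fun i => decide (i ∈ T)) * (μ ^ #T * (1 - μ) ^ (b - #T)) := by
  simp only [pf, eval_finsetSum, eval_mul, eval_C, eval_pow, eval_X]
  exact sum_coeffS_mul_pow _ μ

theorem eval_pf_mem_Icc {b : ℕ} (f : (Fin b → Bool) → Bool) {μ : ℝ} (hμ : μ ∈ Set.Icc 0 1) :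
    (pf f).eval μ ∈ Set.Icc 0 1 := by
  have hweight : ∀ T : Finset (Fin b), 0 ≤ μ ^ #T * (1 - μ) ^ (b - #T) := fun T =>
    mul_nonneg (pow_nonneg hμ.1 _) (pow_nonneg (sub_nonneg.mpr hμ.2) _)
  rw [eval_pf]
  constructor
  · exact sum_nonneg fun T _ => mul_nonneg (bval_nonneg _) (hweight T)
  · calc ∑ T, bval (f fun i => decide (i ∈ T)) * (μ ^ #T * (1 - μ) ^ (b - #T))
        ≤ ∑ T : Finset (Fin b), μ ^ #T * (1 - μ) ^ (b - #T) :=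
          sum_le_sum fun T _ => mul_le_of_le_one_left (hweight T) (bval_le_one _)
      _ = 1 := by rw [Fin.sum_pow_mul_eq_add_pow, add_sub_cancel, one_pow]

theorem natDegree_pf_le_degB {b : ℕ} (f : (Fin b → Bool) → Bool) :
    (pf f).natDegree ≤ degB f := by
  refine natDegree_sum_le_of_forall_le _ _ fun S _ => ?_
  by_cases hS : coeffS (fun x => bval (f x)) S = 0
  · simp [hS]
  · exact (natDegree_C_mul_X_pow_le _ _).trans
      (le_sup (f := card) (mem_filter.mpr ⟨mem_univ S, hS⟩))

theorem coeff_pf {b : ℕ} (f : (Fin b → Bool) → Bool) (k : ℕ) :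
    (pf f).coeff k = ∑ S ∈ powersetCard k univ, coeffS (fun x => bval (f x)) S := by
  rw [powersetCard_eq_filter, powerset_univ, sum_filter]
  simp only [pf, finsetSum_coeff, coeff_C_mul_X_pow]
  simp_rw [@eq_comm _ k]

theorem coeffS_pair {n : ℕ} (g : (Fin n → Bool) → ℝ) {i j : Fin n} (hij : i ≠ j) :
    coeffS g {i, j} = g (fun k => decide (k ∈ ({i, j} : Finset (Fin n))))
      - g (fun k => decide (k = i)) - g (fun k => decide (k = j)) + g (fun _ => false) := by
  have hi : i ∉ (insert j ∅ : Finset (Fin n)) := by simp [hij]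
  rw [coeffS, show ({i, j} : Finset (Fin n)) = insert i (insert j ∅) by simp]
  simp only [sum_powerset_insert hi, sum_powerset_insert (notMem_empty j), powerset_empty,
    sum_singleton]
  simp only [insert_empty_eq, card_pair hij, card_empty, card_singleton, tsub_zero, tsub_self,
    Nat.add_one_sub_one, even_two, Even.neg_pow, one_pow, pow_one, pow_zero, neg_mul, one_mul,
    notMem_empty, decide_false, mem_singleton, mem_insert, Bool.decide_or]
  ring

theorem coeffS_le_neg_one_of_card_eq_two {b : ℕ} {f : (Fin b → Bool) → Bool} (hf : stdForm f)
    {S : Finset (Fin b)} (hS : #S = 2) : coeffS (fun x => bval (f x)) S ≤ -1 := by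
  obtain ⟨i, j, hij, rfl⟩ := card_eq_two.mp hS
  rw [coeffS_pair _ hij, hf.1, hf.2 i, hf.2 j]
  linarith [bval_le_one (f fun k => decide (k ∈ ({i, j} : Finset (Fin b)))), bval_true,
    bval_false]

theorem coeff_two_pf_le_neg_choose {b : ℕ} {f : (Fin b → Bool) → Bool} (hf : stdForm f) :
    (pf f).coeff 2 ≤ -(b.choose 2 : ℝ) := by
  rw [coeff_pf]
  calc ∑ S ∈ powersetCard 2 univ, coeffS (fun x => bval (f x)) S
      ≤ ∑ _S ∈ powersetCard 2 (univ : Finset (Fin b)), (-1 : ℝ) :=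
        sum_le_sum fun S hS => coeffS_le_neg_one_of_card_eq_two hf (mem_powersetCard.mp hS).2
    _ = -(b.choose 2 : ℝ) := by simp

end BF

theorem Polynomial.eval_zero_derivative_derivative {R : Type*} [CommSemiring R] (p : R[X]) :
    (derivative (derivative p)).eval 0 = 2 * p.coeff 2 := by
  rw [← coeff_zero_eq_eval_zero, show derivative (derivative p) = derivative^[2] p from rfl,
    coeff_iterate_derivative]
  simp [Nat.descFactorial, two_mul]

/-- if `f` is in standard form then (1) `deg p_f ≤ deg f`,
(2) `0 ≤ p_f(μ) ≤ 1` on `[0,1]`, and (3) `|p_f''(0)| ≥ b(b-1)`. -/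
theorem stmt2 {b : ℕ} (f : (Fin b → Bool) → Bool) (hf : stdForm f) :
    (pf f).natDegree ≤ degB f ∧
    (∀ μ ∈ Set.Icc (0 : ℝ) 1, 0 ≤ (pf f).eval μ ∧ (pf f).eval μ ≤ 1) ∧
    (b : ℝ) * ((b : ℝ) - 1) ≤
      |(Polynomial.derivative (Polynomial.derivative (pf f))).eval 0| := by
  refine ⟨natDegree_pf_le_degB f, fun μ hμ => eval_pf_mem_Icc f hμ, ?_⟩
  have hchoose : (b : ℝ) * ((b : ℝ) - 1) = 2 * b.choose 2 := by
    rw [Nat.cast_choose_two]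
    ring
  rw [eval_zero_derivative_derivative, abs_mul, abs_two, hchoose]
  gcongr
  exact le_abs.mpr (Or.inr (le_neg.mpr (coeff_two_pf_le_neg_choose hf)))
end

section
/- If there exists a boolean function f : {0,1}^n → {0,1} of degree d with block sensitivity b, then there exists a boolean function g : {0,1}^b → {0,1} of degree at most d with g(0)=0 and g(e_i)=1 for every standard basis vector e_i. -/
open Finset
open scoped Classical

open BF

/-!
Fix an input `x` and pairwise disjoint blocks `B₁, …, B_b` with `f (x ⊕ Bₖ) ≠ f x`, and put
`g y = f (x ⊕ ⋃_{yₖ = 1} Bₖ) xor f x`. Then `g 0 = 0` and `g eₖ = 1`. Each input bit of `f` is a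
function of at most one bit of `y` (the blocks are disjoint), so a monomial of `f` of degree `s`
becomes a function of at most `s` bits of `y`, whose expansion has degree at most `s`; xoring
with the constant `f x` is an affine change `t ↦ 1 - t` or `t ↦ t`, which keeps the degree.
-/

namespace BF

open Function

variable {m n : ℕ}

theorem coeffS_add (F G : (Fin n → Bool) → ℝ) (S : Finset (Fin n)) :
    coeffS (fun x => F x + G x) S = coeffS F S + coeffS G S := by
  simp only [coeffS, mul_add, sum_add_distrib]

theorem coeffS_const_mul (c : ℝ) (F : (Fin n → Bool) → ℝ) (S : Finset (Fin n)) :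
    coeffS (fun x => c * F x) S = c * coeffS F S := by
  simp only [coeffS, mul_sum]
  exact sum_congr rfl fun _ _ => by ring

theorem coeffS_sum {ι : Type*} (s : Finset ι) (F : ι → (Fin n → Bool) → ℝ)
    (S : Finset (Fin n)) :
    coeffS (fun x => ∑ j ∈ s, F j x) S = ∑ j ∈ s, coeffS (F j) S := by
  simp only [coeffS, mul_sum]
  exact sum_comm

/-- Pair each `T ⊆ S.erase j` with `insert j T`: the two terms cancel. -/
theorem coeffS_eq_zero_of_dependsOn (F : (Fin n → Bool) → ℝ) {J S : Finset (Fin n)}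
    (hF : ∀ x y, (∀ i ∈ J, x i = y i) → F x = F y) (hS : ¬ S ⊆ J) : coeffS F S = 0 := by
  obtain ⟨j, hjS, hjJ⟩ := not_subset.1 hS
  have hj : j ∉ S.erase j := notMem_erase j S
  rw [coeffS, ← insert_erase hjS, sum_powerset_insert hj, ← sum_add_distrib]
  refine sum_eq_zero fun T hT => ?_
  have hTS : T ⊆ S.erase j := mem_powerset.1 hT
  have hjT : j ∉ T := fun h => hj (hTS h)
  have hval : F (fun i => decide (i ∈ insert j T)) = F (fun i => decide (i ∈ T)) :=
    hF _ _ fun i hi => by simp [ne_of_mem_of_not_mem hi hjJ]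
  have hle : T.card ≤ (S.erase j).card := card_le_card hTS
  rw [hval, card_insert_of_notMem hj, card_insert_of_notMem hjT,
    show (S.erase j).card + 1 - T.card = (S.erase j).card - T.card + 1 by omega,
    Nat.add_sub_add_right, pow_succ]
  ring

theorem sum_Icc_neg_one_pow_card_sub {α R : Type*} [DecidableEq α] [Ring R] {T X : Finset α}
    (hTX : T ⊆ X) :
    ∑ S ∈ Icc T X, (-1 : R) ^ (S.card - T.card) = if T = X then 1 else 0 := by
  rw [Icc_eq_image_powerset hTX, sum_image]
  · have hcard : ∀ U ∈ (X \ T).powerset, (T ∪ U).card - T.card = U.card := fun U hU => by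
      rw [card_union_of_disjoint (disjoint_sdiff.mono_right (mem_powerset.1 hU))]; omega
    have hsum : ∑ U ∈ (X \ T).powerset, (-1 : R) ^ U.card = if X \ T = ∅ then 1 else 0 := by
      have := congrArg (Int.cast : ℤ → R) (sum_powerset_neg_one_pow_card (x := X \ T))
      rw [Int.cast_sum, apply_ite Int.cast, Int.cast_one, Int.cast_zero] at this
      simpa only [Int.cast_pow, Int.cast_neg, Int.cast_one] using this
    have hiff : X \ T = ∅ ↔ T = X := by
      rw [sdiff_eq_empty_iff_subset]
      exact ⟨subset_antisymm hTX, fun h => h ▸ subset_rfl⟩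
    rw [sum_congr rfl fun U hU => by rw [hcard U hU], hsum]
    simp only [hiff]
  · intro U hU V hV hUV
    rw [← union_sdiff_cancel_left (disjoint_sdiff.mono_right (mem_powerset.1 hU)),
      ← union_sdiff_cancel_left (disjoint_sdiff.mono_right (mem_powerset.1 hV))]
    exact congrArg (· \ T) hUV

theorem prod_bval_decide_mem (X S : Finset (Fin n)) :
    ∏ i ∈ S, bval (decide (i ∈ X)) = if S ⊆ X then 1 else 0 := by
  split_ifs with h
  · exact prod_eq_one fun i hi => by simp [bval, h hi]
  · obtain ⟨i, hiS, hiX⟩ := not_subset.1 h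
    exact prod_eq_zero hiS (by simp [bval, hiX])

theorem sum_coeffS_mul_prod_bval (F : (Fin n → Bool) → ℝ) (x : Fin n → Bool) :
    ∑ S, coeffS F S * ∏ i ∈ S, bval (x i) = F x := by
  set X := univ.filter fun i => x i = true
  have hx : x = fun i => decide (i ∈ X) := funext fun i => by simp [X]
  rw [hx]
  simp only [prod_bval_decide_mem, mul_ite, mul_one, mul_zero, ← sum_filter]
  rw [show univ.filter (· ⊆ X) = X.powerset by ext; simp]
  simp only [coeffS]
  rw [sum_comm' (t' := X.powerset) (s' := fun T => Icc T X) fun S T => by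
    simp only [mem_powerset, mem_Icc]
    exact ⟨fun h => ⟨⟨h.2, h.1⟩, h.2.trans h.1⟩, fun h => ⟨h.1.2, h.1.1⟩⟩]
  simp only [← sum_mul]
  rw [sum_congr rfl fun T hT => by rw [sum_Icc_neg_one_pow_card_sub (mem_powerset.1 hT)]]
  simp

theorem degF_le_iff {F : (Fin n → Bool) → ℝ} {d : ℕ} :
    degF F ≤ d ↔ ∀ S : Finset (Fin n), d < S.card → coeffS F S = 0 := by
  simp only [degF, Finset.sup_le_iff, mem_filter, mem_univ, true_and]
  exact forall_congr' fun S => by rw [← not_lt, not_imp_not]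

theorem card_le_degF {F : (Fin n → Bool) → ℝ} {S : Finset (Fin n)} (hS : coeffS F S ≠ 0) :
    S.card ≤ degF F :=
  le_sup (f := Finset.card) (mem_filter.2 ⟨mem_univ S, hS⟩)

theorem degF_le_card_of_dependsOn (F : (Fin n → Bool) → ℝ) {J : Finset (Fin n)}
    (hF : ∀ x y, (∀ i ∈ J, x i = y i) → F x = F y) : degF F ≤ J.card :=
  degF_le_iff.2 fun _ hS =>
    coeffS_eq_zero_of_dependsOn F hF fun h => (card_le_card h).not_gt hS

theorem degF_const (c : ℝ) : degF (fun _ : Fin n → Bool => c) = 0 :=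
  Nat.le_zero.1 (degF_le_card_of_dependsOn (J := ∅) _ fun _ _ _ => rfl)

theorem degF_const_add_le (c : ℝ) (F : (Fin n → Bool) → ℝ) :
    degF (fun x => c + F x) ≤ degF F :=
  degF_le_iff.2 fun S hS => by
    have hS₀ : ¬ S ⊆ ∅ := fun h => by simp [subset_empty.1 h] at hS
    rw [coeffS_add, coeffS_eq_zero_of_dependsOn (J := ∅) _ (fun _ _ _ => rfl) hS₀, zero_add,
      degF_le_iff.1 le_rfl S hS]

theorem degF_const_mul_le (c : ℝ) (F : (Fin n → Bool) → ℝ) :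
    degF (fun x => c * F x) ≤ degF F :=
  degF_le_iff.2 fun S hS => by rw [coeffS_const_mul, degF_le_iff.1 le_rfl S hS, mul_zero]

theorem degF_sum_le {ι : Type*} (s : Finset ι) (F : ι → (Fin n → Bool) → ℝ) {d : ℕ}
    (hF : ∀ j ∈ s, degF (F j) ≤ d) : degF (fun x => ∑ j ∈ s, F j x) ≤ d :=
  degF_le_iff.2 fun S hS => by
    rw [coeffS_sum]
    exact sum_eq_zero fun j hj => degF_le_iff.1 (hF j hj) S hS

/-- The monomial `∏_{i ∈ S} x_i` becomes a function of at most `|S|` of the new variables. -/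
theorem degF_comp_le (F : (Fin n → Bool) → ℝ) (φ : (Fin m → Bool) → Fin n → Bool)
    (K : Fin n → Finset (Fin m)) (hK : ∀ i, (K i).card ≤ 1)
    (hφ : ∀ i y z, (∀ k ∈ K i, y k = z k) → φ y i = φ z i) :
    degF (fun y => F (φ y)) ≤ degF F := by
  simp only [← sum_coeffS_mul_prod_bval F (φ _)]
  refine degF_sum_le _ _ fun S _ => ?_
  by_cases hS : coeffS F S = 0
  · simp [hS, degF_const]
  calc degF (fun y => coeffS F S * ∏ i ∈ S, bval (φ y i))
      ≤ degF (fun y => ∏ i ∈ S, bval (φ y i)) := degF_const_mul_le _ _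
    _ ≤ (S.biUnion K).card := degF_le_card_of_dependsOn _ fun y z hyz =>
        prod_congr rfl fun i hi => by
          rw [hφ i y z fun k hk => hyz k (mem_biUnion.2 ⟨i, hi, hk⟩)]
    _ ≤ ∑ i ∈ S, (K i).card := card_biUnion_le
    _ ≤ ∑ _i ∈ S, 1 := sum_le_sum fun i _ => hK i
    _ = S.card := by simp
    _ ≤ degF F := card_le_degF hS

theorem degF_flipS_biUnion_le (F : (Fin n → Bool) → ℝ) (x : Fin n → Bool)
    (B : Fin m → Finset (Fin n)) (hB : Pairwise (Disjoint on B)) :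
    degF (fun y => F (flipS x ((univ.filter fun k => y k = true).biUnion B))) ≤ degF F := by
  refine degF_comp_le F _ (fun i => univ.filter fun k => i ∈ B k) (fun i => ?_)
    fun i y z hyz => ?_
  · refine card_le_one.2 fun k hk l hl => ?_
    by_contra hkl
    exact disjoint_left.1 (hB hkl) (mem_filter.1 hk).2 (mem_filter.1 hl).2
  · have hmem : ∀ k, i ∈ B k → y k = z k := fun k hk => hyz k (mem_filter.2 ⟨mem_univ k, hk⟩)
    simp only [flipS, mem_biUnion, mem_filter, mem_univ, true_and]
    congr 1
    exact propext ⟨fun ⟨k, hk, hi⟩ => ⟨k, hmem k hi ▸ hk, hi⟩,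
      fun ⟨k, hk, hi⟩ => ⟨k, (hmem k hi).symm ▸ hk, hi⟩⟩

theorem exists_pairwise_disjoint_sensitive_blocks (f : (Fin n → Bool) → Bool) :
    ∃ (x : Fin n → Bool) (B : Fin (bs f) → Finset (Fin n)),
      Pairwise (Disjoint on B) ∧ ∀ k, f (flipS x (B k)) ≠ f x := by
  obtain ⟨x, -, hx⟩ := exists_mem_eq_sup univ univ_nonempty (bsAt f)
  obtain ⟨𝓑, h𝓑, hcard⟩ := exists_mem_eq_sup
    (univ.filter fun 𝓑 : Finset (Finset (Fin n)) =>
      (∀ B ∈ 𝓑, f (flipS x B) ≠ f x) ∧ ∀ A ∈ 𝓑, ∀ B ∈ 𝓑, A ≠ B → Disjoint A B)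
    ⟨∅, by simp⟩ Finset.card
  obtain ⟨-, hsens, hdisj⟩ := mem_filter.1 h𝓑
  let e : 𝓑 ≃ Fin (bs f) :=
    Fintype.equivFinOfCardEq (by rw [Fintype.card_coe, ← hcard, bs, hx]; rfl)
  refine ⟨x, fun k => e.symm k, fun k l hkl => ?_, fun k => hsens _ (e.symm k).2⟩
  exact hdisj _ (e.symm k).2 _ (e.symm l).2 fun h => hkl (e.symm.injective (Subtype.ext h))

theorem bval_xor (a c : Bool) : bval (xor a c) = bval c + (1 - 2 * bval c) * bval a := by
  cases a <;> cases c <;> norm_num [bval]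

end BF

/-- from a degree-`d` function with block sensitivity `b` one gets a
function `g : {0,1}^b → {0,1}` of degree at most `d` in standard form. -/
theorem stmt4 {n : ℕ} (f : (Fin n → Bool) → Bool) (d b : ℕ)
    (hdeg : degB f = d) (hbs : bs f = b) :
    ∃ g : (Fin b → Bool) → Bool, degB g ≤ d ∧
      g (fun _ => false) = false ∧
      ∀ i : Fin b, g (fun j => decide (j = i)) = true := by
  subst hdeg hbs
  obtain ⟨x, B, hdisj, hsens⟩ := exists_pairwise_disjoint_sensitive_blocks f
  let flipBlocks : (Fin (bs f) → Bool) → Fin n → Bool := fun y =>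
    flipS x ((univ.filter fun k => y k = true).biUnion B)
  refine ⟨fun y => xor (f (flipBlocks y)) (f x), ?_, ?_, fun j => ?_⟩
  · calc degB (fun y => xor (f (flipBlocks y)) (f x))
        = degF (fun y => bval (f x) + (1 - 2 * bval (f x)) * bval (f (flipBlocks y))) := by
          simp only [degB, bval_xor]
      _ ≤ degF (fun y => bval (f (flipBlocks y))) :=
          (degF_const_add_le _ _).trans (degF_const_mul_le _ _)
      _ ≤ degB f := degF_flipS_biUnion_le (fun z => bval (f z)) x B hdisj
  · have hx : flipS x ∅ = x := funext fun i => if_neg (notMem_empty i)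
    simp only [flipBlocks, Bool.false_eq_true, filter_false, biUnion_empty, hx, Bool.xor_self]
  · have hj : (univ.filter fun k => decide (k = j) = true) = {j} := by ext; simp
    simp only [flipBlocks, hj, singleton_biUnion]
    simpa using hsens j
end

section
/- If p is a real polynomial of degree at most d with |p(x)| ≤ 5/6 for all x ∈ [−1,1], then |p'(0)| ≤ (5/6)·d². -/
open Finset
open scoped Classical

open BF

/-!
Put `N = ⌈d/2⌉` and `x_k = (k - N)/N` for `0 ≤ k ≤ 2N`. The polynomial `(p(x) - p(0))/x` has degree
`< 2N`, so its `2N`-th finite difference on these nodes vanishes. Since `p(0)` drops out by the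
symmetry `k ↦ 2N - k`, this writes `binom(2N, N) p'(0)` as `∑_{k ≠ N} ± binom(2N, k) p(x_k)/x_k`.
As `|x_k| ≥ 1/N`, we get `|p'(0)| ≤ N (4^N / binom(2N, N) - 1) sup |p| ≤ N (2N - 1) sup |p|`,
and `N (2N - 1) ≤ d²`.
-/

open Polynomial

namespace Polynomial

theorem sum_range_alternating_choose_smul_eval_eq_zero {R : Type*} [CommRing R] {P : R[X]}
    {n : ℕ} (hP : P.natDegree < n) (y : R) :
    ∑ k ∈ range (n + 1), ((-1 : ℤ) ^ (n - k) * n.choose k) • P.eval (y + k) = 0 := by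
  simpa [fwdDiff_iter_eq_sum_shift] using congr_fun (fwdDiff_iter_eq_zero_of_degree_lt hP) y

theorem eval_derivative_zero {R : Type*} [CommSemiring R] (p : R[X]) :
    p.derivative.eval 0 = p.coeff 1 := by
  simp [← coeff_zero_eq_eval_zero, coeff_derivative]

theorem eval_divX_mul_add_eval_zero {R : Type*} [CommSemiring R] (p : R[X]) (x : R) :
    p.divX.eval x * x + p.eval 0 = p.eval x := by
  simpa [coeff_zero_eq_eval_zero] using congr_arg (eval x) (divX_mul_X_add p)

end Polynomial

theorem neg_one_pow_sub_of_even {R : Type*} [Ring R] {n k : ℕ} (hn : Even n) (hk : k ≤ n) :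
    (-1 : R) ^ (n - k) = (-1) ^ k := by
  rw [neg_one_pow_eq_pow_mod_two, neg_one_pow_eq_pow_mod_two (n := k)]
  obtain ⟨m, rfl⟩ := hn
  congr 1
  omega

/- In this sum and the ones below, the term `k = N` is zero because `x / 0 = 0` and `0⁻¹ = 0`. -/
theorem sum_range_alternating_choose_div_sub_eq_zero (N : ℕ) :
    ∑ k ∈ range (2 * N + 1), (-1 : ℝ) ^ k * (2 * N).choose k / ((k : ℝ) - N) = 0 := by
  refine neg_eq_self.mp ?_
  nth_rewrite 1 [← sum_range_reflect]
  rw [← sum_neg_distrib]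
  refine sum_congr rfl fun k hk => ?_
  have hk : k ≤ 2 * N := by rw [mem_range] at hk; omega
  rw [show 2 * N + 1 - 1 - k = 2 * N - k by omega, Nat.choose_symm hk, Nat.cast_sub hk,
    neg_one_pow_sub_of_even (even_two_mul N) hk, Nat.cast_mul, Nat.cast_ofNat,
    show 2 * (N : ℝ) - k - N = -(k - N) by ring, div_neg, neg_neg]

theorem sum_range_choose_mul_inv_abs_sub_le (N : ℕ) :
    ∑ k ∈ range (2 * N + 1), ((2 * N).choose k : ℝ) * |(k : ℝ) - N|⁻¹
      ≤ 4 ^ N - N.centralBinom := by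
  have hN : N ∈ range (2 * N + 1) := by rw [mem_range]; omega
  have htotal : ∑ k ∈ range (2 * N + 1), ((2 * N).choose k : ℝ) = 4 ^ N := by
    rw [← Nat.cast_sum, Nat.sum_range_choose, pow_mul]
    norm_num
  rw [← add_sum_erase _ _ hN, ← htotal, ← add_sum_erase _ _ hN,
    Nat.centralBinom_eq_two_mul_choose]
  simp only [sub_self, abs_zero, inv_zero, mul_zero, zero_add, add_sub_cancel_left]
  refine sum_le_sum fun k hk => mul_le_of_le_one_right (Nat.cast_nonneg _) ?_
  apply inv_le_one_of_one_le₀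
  have hk : (k : ℤ) - N ≠ 0 := by rw [mem_erase] at hk; omega
  exact_mod_cast Int.one_le_abs hk

theorem centralBinom_mul_coeff_one_eq {g : ℝ[X]} {N : ℕ} (hN : 0 < N)
    (hg : g.natDegree ≤ 2 * N) :
    (-1) ^ N * N.centralBinom * g.coeff 1 = -∑ k ∈ range (2 * N + 1),
      (-1 : ℝ) ^ k * (2 * N).choose k * g.eval ((k : ℝ) - N) / ((k : ℝ) - N) := by
  have hdivX : g.divX.natDegree < 2 * N := by
    rw [natDegree_divX_eq_natDegree_tsub_one]
    omega
  have hterm : ∀ k ∈ range (2 * N + 1),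
      ((-1 : ℤ) ^ (2 * N - k) * (2 * N).choose k) • g.divX.eval (-(N : ℝ) + k)
        = (-1 : ℝ) ^ k * (2 * N).choose k * g.eval ((k : ℝ) - N) / ((k : ℝ) - N)
          - g.eval 0 * ((-1 : ℝ) ^ k * (2 * N).choose k / ((k : ℝ) - N))
          + if k = N then (-1) ^ N * N.centralBinom * g.coeff 1 else 0 := by
    intro k hk
    have hk : k ≤ 2 * N := by rw [mem_range] at hk; omega
    rw [zsmul_eq_mul, Int.cast_mul, Int.cast_pow, Int.cast_neg, Int.cast_one, Int.cast_natCast,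
      neg_one_pow_sub_of_even (even_two_mul N) hk, neg_add_eq_sub]
    split_ifs with hkN
    · subst hkN
      simp [Nat.centralBinom_eq_two_mul_choose, ← coeff_zero_eq_eval_zero, coeff_divX]
    · have hx : (k : ℝ) - N ≠ 0 := sub_ne_zero.mpr (by exact_mod_cast hkN)
      rw [← eval_divX_mul_add_eval_zero g ((k : ℝ) - N)]
      field_simp
      ring
  have hsum := sum_range_alternating_choose_smul_eval_eq_zero hdivX (-N : ℝ)
  rw [sum_congr rfl hterm, sum_add_distrib, sum_sub_distrib, ← mul_sum,
    sum_range_alternating_choose_div_sub_eq_zero, sum_ite_eq',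
    if_pos (mem_range.mpr (by omega))] at hsum
  linarith

theorem centralBinom_mul_abs_coeff_one_le {g : ℝ[X]} {N : ℕ} {M : ℝ} (hN : 0 < N)
    (hg : g.natDegree ≤ 2 * N) (hM : ∀ k ∈ range (2 * N + 1), |g.eval ((k : ℝ) - N)| ≤ M) :
    N.centralBinom * |g.coeff 1| ≤ M * (4 ^ N - N.centralBinom) := by
  have hM₀ : 0 ≤ M := (abs_nonneg _).trans (hM N (mem_range.mpr (by omega)))
  calc (N.centralBinom : ℝ) * |g.coeff 1| = |(-1) ^ N * N.centralBinom * g.coeff 1| := by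
        simp [abs_mul]
    _ ≤ ∑ k ∈ range (2 * N + 1),
          |(-1 : ℝ) ^ k * (2 * N).choose k * g.eval ((k : ℝ) - N) / ((k : ℝ) - N)| := by
        rw [centralBinom_mul_coeff_one_eq hN hg, abs_neg]
        exact abs_sum_le_sum_abs _ _
    _ ≤ ∑ k ∈ range (2 * N + 1), M * ((2 * N).choose k * |(k : ℝ) - N|⁻¹) := by
        refine sum_le_sum fun k hk => ?_
        rw [abs_div, abs_mul, abs_mul, abs_pow, abs_neg, abs_one, one_pow, one_mul,
          Nat.abs_cast, div_eq_mul_inv]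
        have := mul_le_mul_of_nonneg_left (hM k hk)
          (mul_nonneg (Nat.cast_nonneg ((2 * N).choose k)) (inv_nonneg.mpr (abs_nonneg ((k : ℝ) - N))))
        linarith
    _ ≤ M * (4 ^ N - N.centralBinom) := by
        rw [← mul_sum]
        exact mul_le_mul_of_nonneg_left (sum_range_choose_mul_inv_abs_sub_le N) hM₀

theorem centralBinom_mul_abs_coeff_one_le_of_abs_eval_le {p : ℝ[X]} {N : ℕ} {M : ℝ} (hN : 0 < N)
    (hdeg : p.natDegree ≤ 2 * N) (hp : ∀ x ∈ Set.Icc (-1 : ℝ) 1, |p.eval x| ≤ M) :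
    N.centralBinom * |p.coeff 1| ≤ N * (M * (4 ^ N - N.centralBinom)) := by
  have hN' : (0 : ℝ) < N := by exact_mod_cast hN
  set g := p.comp (C (N : ℝ)⁻¹ * X)
  have hg : g.natDegree ≤ 2 * N := by
    refine natDegree_comp_le.trans ?_
    rw [natDegree_C_mul_X _ (by positivity), mul_one]
    exact hdeg
  have hgM : ∀ k ∈ range (2 * N + 1), |g.eval ((k : ℝ) - N)| ≤ M := by
    intro k hk
    have hk : (k : ℝ) ≤ 2 * N := by exact_mod_cast Nat.lt_succ_iff.mp (mem_range.mp hk)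
    simp only [g, eval_comp, eval_mul, eval_C, eval_X]
    refine hp _ ⟨?_, ?_⟩
    · rw [le_inv_mul_iff₀ hN']
      linarith [Nat.cast_nonneg (α := ℝ) k]
    · rw [inv_mul_le_iff₀ hN']
      linarith
  have hcoeff : g.coeff 1 = p.coeff 1 * (N : ℝ)⁻¹ := by rw [comp_C_mul_X_coeff, pow_one]
  have key := centralBinom_mul_abs_coeff_one_le hN hg hgM
  rw [hcoeff, abs_mul, abs_inv, Nat.abs_cast] at key
  calc (N.centralBinom : ℝ) * |p.coeff 1| = N * (N.centralBinom * (|p.coeff 1| * (N : ℝ)⁻¹)) := by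
        field_simp
    _ ≤ N * (M * (4 ^ N - N.centralBinom)) := mul_le_mul_of_nonneg_left key hN'.le

theorem abs_coeff_one_le_of_abs_eval_le {p : ℝ[X]} {N : ℕ} {M : ℝ} (hN : 0 < N)
    (hdeg : p.natDegree ≤ 2 * N) (hp : ∀ x ∈ Set.Icc (-1 : ℝ) 1, |p.eval x| ≤ M) :
    |p.coeff 1| ≤ M * (N * (2 * N - 1)) := by
  have hM : 0 ≤ M := (abs_nonneg _).trans (hp 0 ⟨by norm_num, by norm_num⟩)
  have hC : (0 : ℝ) < N.centralBinom := by exact_mod_cast N.centralBinom_pos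
  have h4 : (4 : ℝ) ^ N ≤ 2 * N * N.centralBinom := by
    exact_mod_cast Nat.four_pow_le_two_mul_self_mul_centralBinom N hN
  refine le_of_mul_le_mul_left ?_ hC
  calc (N.centralBinom : ℝ) * |p.coeff 1| ≤ N * (M * (4 ^ N - N.centralBinom)) :=
        centralBinom_mul_abs_coeff_one_le_of_abs_eval_le hN hdeg hp
    _ ≤ N * (M * (2 * N * N.centralBinom - N.centralBinom)) := by gcongr
    _ = N.centralBinom * (M * (N * (2 * N - 1))) := by ring

theorem abs_eval_derivative_zero_le {p : ℝ[X]} {d : ℕ} {M : ℝ} (hdeg : p.natDegree ≤ d)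
    (hp : ∀ x ∈ Set.Icc (-1 : ℝ) 1, |p.eval x| ≤ M) : |p.derivative.eval 0| ≤ M * d ^ 2 := by
  rw [eval_derivative_zero]
  obtain rfl | hd := Nat.eq_zero_or_pos d
  · simp [coeff_eq_zero_of_natDegree_lt (hdeg.trans_lt one_pos)]
  have hM : 0 ≤ M := (abs_nonneg _).trans (hp 0 ⟨by norm_num, by norm_num⟩)
  set N := (d + 1) / 2
  have hNd : (N : ℝ) ≤ d := by exact_mod_cast (show N ≤ d by omega)
  have h2Nd : 2 * (N : ℝ) ≤ d + 1 := by exact_mod_cast (show 2 * N ≤ d + 1 by omega)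
  calc |p.coeff 1| ≤ M * (N * (2 * N - 1)) :=
        abs_coeff_one_le_of_abs_eval_le (by omega) (by omega) hp
    _ ≤ M * d ^ 2 := by
      gcongr
      nlinarith [Nat.cast_nonneg (α := ℝ) N]

/-- Markov brothers' inequality (k = 1 case, at 0): if `p` has degree
at most `d` and `|p(x)| ≤ 5/6` on `[-1,1]`, then `|p'(0)| ≤ (5/6)·d²`. -/
theorem stmt7 (d : ℕ) (p : Polynomial ℝ) (hdeg : p.natDegree ≤ d)
    (hp : ∀ x ∈ Set.Icc (-1 : ℝ) 1, |p.eval x| ≤ 5 / 6) :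
    |(Polynomial.derivative p).eval 0| ≤ 5 / 6 * (d : ℝ) ^ 2 :=
  abs_eval_derivative_zero_le hdeg hp
end

section
/- Let f : {0,1}^n → {0,1} and let M ⊆ [n] be the variable set of a monomial of maximal degree d = deg(f) appearing with nonzero coefficient in the multilinear expansion of f. Then for every assignment α : M → {0,1}, the restricted function f_α satisfies bs(f_α) ≤ bs(f) − 1. -/
open Finset
open scoped Classical

open BF

/-! If `M` is a monomial of maximal degree of `f`, then for every point `y` the alternating sum
of `f` over the subcube through `y` spanned by `M` collects the coefficients of the monomials
`S ⊇ M`; by maximality only `S = M` survives, so this sum is the nonzero top coefficient.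
Hence `f` is nonconstant on every such subcube: each point has a sensitive block inside `M`.
A sensitive family of `f_α` at `x` yields, after removing `M` from its blocks, a sensitive family
of `f` at the point `x` overwritten by `α` on `M`, to which that block inside `M` can be added. -/

theorem neg_one_pow_sub_eq_mul {R : Type*} [Monoid R] [HasDistribNeg R] {a b : ℕ} (h : b ≤ a) :
    (-1 : R) ^ (a - b) = (-1) ^ a * (-1) ^ b := by
  obtain ⟨k, rfl⟩ := Nat.exists_eq_add_of_le h
  rw [Nat.add_sub_cancel_left, add_comm, pow_add, mul_assoc, ← pow_add,
    Even.neg_one_pow ⟨b, rfl⟩, mul_one]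

namespace Finset

variable {α R : Type*} [DecidableEq α] [CommRing R]

theorem sum_Icc_neg_one_pow_card (A M : Finset α) :
    ∑ T ∈ Icc A M, (-1 : R) ^ #T = if A = M then (-1) ^ #A else 0 := by
  by_cases hAM : A ⊆ M
  · have hdisj : ∀ S ∈ (M \ A).powerset, Disjoint A S := fun S hS =>
      disjoint_of_subset_right (mem_powerset.mp hS) disjoint_sdiff
    have hinj : Set.InjOn (A ∪ ·) ((M \ A).powerset : Set (Finset α)) := fun S hS S' hS' h => by
      rw [← union_sdiff_cancel_left (hdisj S hS), ← union_sdiff_cancel_left (hdisj S' hS')]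
      exact congrArg (· \ A) h
    have hsum : ∑ S ∈ (M \ A).powerset, (-1 : R) ^ #S = if A = M then 1 else 0 := by
      have h := congrArg (Int.cast : ℤ → R) (sum_powerset_neg_one_pow_card (x := M \ A))
      push_cast at h
      rw [h]
      exact if_congr (sdiff_eq_empty_iff_subset.trans ⟨hAM.antisymm, fun h => h.ge⟩) rfl rfl
    rw [Icc_eq_image_powerset hAM, sum_image hinj,
      sum_congr rfl fun S hS => by rw [card_union_of_disjoint (hdisj S hS), pow_add],
      ← mul_sum, hsum, mul_ite, mul_one, mul_zero]
  · rw [Icc_eq_empty (fun h => hAM h), sum_empty, if_neg (fun h => hAM h.le)]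

theorem sum_Icc_neg_one_pow_card_right_sub_card (A M : Finset α) :
    ∑ T ∈ Icc A M, (-1 : R) ^ (#M - #T) = if A = M then 1 else 0 := by
  rw [sum_congr rfl fun T hT => neg_one_pow_sub_eq_mul (card_le_card (mem_Icc.mp hT).2),
    ← mul_sum, sum_Icc_neg_one_pow_card]
  split_ifs with h
  · rw [h, ← pow_add, Even.neg_one_pow ⟨_, rfl⟩]
  · rw [mul_zero]

theorem sum_Icc_neg_one_pow_card_sub_card_left (A M : Finset α) :
    ∑ T ∈ Icc A M, (-1 : R) ^ (#T - #A) = if A = M then 1 else 0 := by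
  rw [sum_congr rfl fun T hT => neg_one_pow_sub_eq_mul (card_le_card (mem_Icc.mp hT).1),
    ← sum_mul, sum_Icc_neg_one_pow_card]
  split_ifs with h
  · rw [← pow_add, Even.neg_one_pow ⟨_, rfl⟩]
  · rw [zero_mul]

end Finset

namespace BF

variable {n : ℕ}

theorem apply_indicator_eq_sum_coeffS (F : (Fin n → Bool) → ℝ) (U : Finset (Fin n)) :
    F (fun i => decide (i ∈ U)) = ∑ S ∈ U.powerset, coeffS F S := by
  unfold coeffS
  rw [sum_comm' (t' := U.powerset) (s' := fun T => Icc T U) (fun S T => by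
    simp only [mem_powerset, mem_Icc]
    exact ⟨fun h => ⟨⟨h.2, h.1⟩, h.2.trans h.1⟩, fun h => ⟨h.1.2, h.1.1⟩⟩)]
  simp_rw [← sum_mul, sum_Icc_neg_one_pow_card_sub_card_left, ite_mul, one_mul, zero_mul]
  rw [sum_ite_eq', if_pos (mem_powerset_self U)]

/-- The `M`-th discrete derivative of `F` at `y`, i.e. the coefficient of the top monomial of the
restriction of `F` to the subcube through `y` spanned by the coordinates in `M`. -/
def cubeDeriv (F : (Fin n → Bool) → ℝ) (M : Finset (Fin n)) (y : Fin n → Bool) : ℝ :=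
  ∑ T ∈ M.powerset, (-1) ^ (#M - #T) * F (M.piecewise (fun i => decide (i ∈ T)) y)

theorem cubeDeriv_empty (F : (Fin n → Bool) → ℝ) (y : Fin n → Bool) :
    cubeDeriv F ∅ y = F y := by
  simp [cubeDeriv]

theorem cubeDeriv_eq_sum_coeffS (F : (Fin n → Bool) → ℝ) (M : Finset (Fin n))
    (y : Fin n → Bool) :
    cubeDeriv F M y =
      ∑ S ∈ (M ∪ ({i | i ∉ M ∧ y i} : Finset (Fin n))).powerset with M ⊆ S, coeffS F S := by
  set X : Finset (Fin n) := {i | i ∉ M ∧ y i}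
  have hpoint : ∀ T ⊆ M,
      M.piecewise (fun i => decide (i ∈ T)) y = fun i => decide (i ∈ T ∪ X) := by
    intro T hT
    funext i
    by_cases hi : i ∈ M
    · simp [hi, X]
    · have hiT : i ∉ T := fun h => hi (hT h)
      simp [hi, hiT, X]
  unfold cubeDeriv
  rw [sum_congr rfl fun T hT => by
      rw [hpoint T (mem_powerset.mp hT), apply_indicator_eq_sum_coeffS F, mul_sum],
    sum_comm' (t' := (M ∪ X).powerset) (s' := fun S => Icc (S ∩ M) M) (fun T S => by
    simp only [mem_powerset, mem_Icc, X, subset_iff, mem_union, mem_inter, mem_filter, mem_univ,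
      true_and]
    grind)]
  simp_rw [← sum_mul, sum_Icc_neg_one_pow_card_right_sub_card, ite_mul, one_mul, zero_mul,
    inter_eq_right]
  rw [sum_filter]

theorem coeffS_eq_zero_of_degF_lt_card {F : (Fin n → Bool) → ℝ} {S : Finset (Fin n)}
    (h : degF F < #S) : coeffS F S = 0 := by
  by_contra hS
  exact h.not_ge (le_sup (mem_filter.mpr ⟨mem_univ S, hS⟩))

theorem cubeDeriv_eq_coeffS_of_card_eq_degF {F : (Fin n → Bool) → ℝ} {M : Finset (Fin n)}
    (hM : #M = degF F) (y : Fin n → Bool) : cubeDeriv F M y = coeffS F M := by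
  rw [cubeDeriv_eq_sum_coeffS,
    sum_eq_single_of_mem M (mem_filter.mpr ⟨mem_powerset.mpr subset_union_left, subset_rfl⟩)]
  intro S hS hSM
  exact coeffS_eq_zero_of_degF_lt_card
    (hM ▸ card_lt_card (ssubset_of_subset_of_ne (mem_filter.mp hS).2 (Ne.symm hSM)))

theorem bval_injective : Function.Injective bval := by
  intro a b
  cases a <;> cases b <;> simp [bval]

theorem flipS_empty (x : Fin n → Bool) : flipS x ∅ = x := by
  funext i
  simp [flipS]

theorem piecewise_indicator_eq_flipS (M T : Finset (Fin n)) (y : Fin n → Bool) :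
    M.piecewise (fun i => decide (i ∈ T)) y = flipS y {i ∈ M | decide (i ∈ T) ≠ y i} := by
  funext i
  by_cases hi : i ∈ M
  · cases hy : y i <;> by_cases hT : i ∈ T <;> simp [flipS, hi, hy, hT]
  · simp [flipS, hi]

theorem exists_flipS_ne_of_cubeDeriv_ne_zero {f : (Fin n → Bool) → Bool} {M : Finset (Fin n)}
    (hM : M.Nonempty) {y : Fin n → Bool} (hy : cubeDeriv (fun x => bval (f x)) M y ≠ 0) :
    ∃ B ⊆ M, f (flipS y B) ≠ f y := by
  by_contra! h
  apply hy
  have hconst : ∀ T ∈ M.powerset, f (M.piecewise (fun i => decide (i ∈ T)) y) = f y :=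
    fun T _ => by rw [piecewise_indicator_eq_flipS]; exact h _ (filter_subset _ _)
  rw [cubeDeriv, sum_congr rfl fun T hT => by rw [hconst T hT], ← sum_mul, ← Iic_eq_powerset,
    ← Icc_bot, bot_eq_empty, sum_Icc_neg_one_pow_card_right_sub_card,
    if_neg hM.ne_empty.symm, zero_mul]

def IsSensitiveFamily (f : (Fin n → Bool) → Bool) (x : Fin n → Bool)
    (𝓑 : Finset (Finset (Fin n))) : Prop :=
  (∀ B ∈ 𝓑, f (flipS x B) ≠ f x) ∧ (𝓑 : Set (Finset (Fin n))).PairwiseDisjoint id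

theorem bsAt_eq_sup (f : (Fin n → Bool) → Bool) (x : Fin n → Bool) :
    bsAt f x = (univ.filter (IsSensitiveFamily f x)).sup card := by
  unfold bsAt
  congr 1
  ext 𝓑
  simp only [mem_filter, mem_univ, true_and, IsSensitiveFamily]
  rfl

theorem card_le_bsAt {f : (Fin n → Bool) → Bool} {x : Fin n → Bool} {𝓑 : Finset (Finset (Fin n))}
    (h : IsSensitiveFamily f x 𝓑) : #𝓑 ≤ bsAt f x :=
  bsAt_eq_sup f x ▸ le_sup (mem_filter.mpr ⟨mem_univ _, h⟩)

theorem exists_isSensitiveFamily_card_eq_bsAt (f : (Fin n → Bool) → Bool) (x : Fin n → Bool) :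
    ∃ 𝓑, IsSensitiveFamily f x 𝓑 ∧ #𝓑 = bsAt f x := by
  have hempty : IsSensitiveFamily f x ∅ := ⟨by simp, by simp⟩
  obtain ⟨𝓑, h𝓑, hcard⟩ := exists_mem_eq_sup _ ⟨∅, mem_filter.mpr ⟨mem_univ _, hempty⟩⟩ card
  exact ⟨𝓑, (mem_filter.mp h𝓑).2, by rw [bsAt_eq_sup, hcard]⟩

theorem bs_eq_zero_of_forall_eq {f : (Fin n → Bool) → Bool} (h : ∀ x y, f x = f y) :
    bs f = 0 := by
  refine Nat.eq_zero_of_le_zero (Finset.sup_le fun x _ => ?_)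
  obtain ⟨𝓑, h𝓑, hcard⟩ := exists_isSensitiveFamily_card_eq_bsAt f x
  rw [← hcard, Nat.le_zero, card_eq_zero, eq_empty_iff_forall_notMem]
  exact fun B hB => h𝓑.1 B hB (h _ _)

theorem nonempty_of_flipS_ne {f : (Fin n → Bool) → Bool} {x : Fin n → Bool} {B : Finset (Fin n)}
    (h : f (flipS x B) ≠ f x) : B.Nonempty := by
  rw [nonempty_iff_ne_empty]
  rintro rfl
  exact h (by rw [flipS_empty])

theorem IsSensitiveFamily.insert {f : (Fin n → Bool) → Bool} {x : Fin n → Bool}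
    {𝓑 : Finset (Finset (Fin n))} {B : Finset (Fin n)} (h : IsSensitiveFamily f x 𝓑)
    (hB : f (flipS x B) ≠ f x) (hdisj : ∀ C ∈ 𝓑, Disjoint B C) :
    IsSensitiveFamily f x (insert B 𝓑) := by
  refine ⟨forall_mem_insert _ _ _ |>.mpr ⟨hB, h.1⟩, ?_⟩
  rw [coe_insert]
  exact h.2.insert fun C hC _ => hdisj C hC

theorem card_insert_of_disjoint_of_flipS_ne {f : (Fin n → Bool) → Bool} {x : Fin n → Bool}
    {𝓑 : Finset (Finset (Fin n))} {B : Finset (Fin n)}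
    (hB : f (flipS x B) ≠ f x) (hdisj : ∀ C ∈ 𝓑, Disjoint B C) : #(insert B 𝓑) = #𝓑 + 1 :=
  card_insert_of_notMem fun hmem =>
    (nonempty_of_flipS_ne hB).ne_empty (disjoint_self.mp (hdisj B hmem))

theorem restrict_empty (f : (Fin n → Bool) → Bool) (α : Fin n → Bool) : restrict f ∅ α = f := rfl

theorem restrict_flipS (f : (Fin n → Bool) → Bool) (M : Finset (Fin n)) (α x : Fin n → Bool)
    (B : Finset (Fin n)) :
    restrict f M α (flipS x B) = f (flipS (M.piecewise α x) (B \ M)) := by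
  unfold restrict
  congr 1
  funext i
  by_cases hi : i ∈ M <;> simp [flipS, hi]

theorem IsSensitiveFamily.image_sdiff_of_restrict {f : (Fin n → Bool) → Bool}
    {M : Finset (Fin n)} {α x : Fin n → Bool} {𝓑 : Finset (Finset (Fin n))}
    (h : IsSensitiveFamily (restrict f M α) x 𝓑) :
    IsSensitiveFamily f (M.piecewise α x) (𝓑.image (· \ M)) := by
  refine ⟨forall_mem_image.mpr fun B hB => ?_, ?_⟩
  · rw [← restrict_flipS f M α x B]
    exact h.1 B hB
  · rw [coe_image]
    exact h.2.image_of_le fun B => sdiff_le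

theorem IsSensitiveFamily.card_image_sdiff_of_restrict {f : (Fin n → Bool) → Bool}
    {M : Finset (Fin n)} {α x : Fin n → Bool} {𝓑 : Finset (Finset (Fin n))}
    (h : IsSensitiveFamily (restrict f M α) x 𝓑) : #(𝓑.image (· \ M)) = #𝓑 := by
  refine card_image_of_injOn fun B hB C hC hBC => ?_
  by_contra hne
  have hB' : (B \ M).Nonempty := nonempty_of_flipS_ne (f := f) (x := M.piecewise α x)
    (by rw [← restrict_flipS f M α x B]; exact h.1 B hB)
  have hdisj : Disjoint (B \ M) (C \ M) := (h.2 hB hC hne).mono sdiff_le sdiff_le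
  rw [← hBC, disjoint_self] at hdisj
  exact hB'.ne_empty hdisj

theorem bsAt_restrict_lt {f : (Fin n → Bool) → Bool} {M : Finset (Fin n)} {α x : Fin n → Bool}
    (hM : ∃ B ⊆ M, f (flipS (M.piecewise α x) B) ≠ f (M.piecewise α x)) :
    bsAt (restrict f M α) x < bsAt f (M.piecewise α x) := by
  obtain ⟨B₀, hB₀M, hB₀⟩ := hM
  obtain ⟨𝓑, h𝓑, hcard⟩ := exists_isSensitiveFamily_card_eq_bsAt (restrict f M α) x
  have hdisj : ∀ C ∈ 𝓑.image (· \ M), Disjoint B₀ C := forall_mem_image.mpr fun B _ =>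
    disjoint_of_subset_left hB₀M disjoint_sdiff
  calc bsAt (restrict f M α) x < #(insert B₀ (𝓑.image (· \ M))) := by
        rw [card_insert_of_disjoint_of_flipS_ne hB₀ hdisj, h𝓑.card_image_sdiff_of_restrict,
          hcard]
        exact Nat.lt_succ_self _
    _ ≤ bsAt f (M.piecewise α x) := card_le_bsAt (h𝓑.image_sdiff_of_restrict.insert hB₀ hdisj)

theorem bs_restrict_lt {f : (Fin n → Bool) → Bool} {M : Finset (Fin n)}
    (hM : ∀ y, ∃ B ⊆ M, f (flipS y B) ≠ f y) (α : Fin n → Bool) :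
    bs (restrict f M α) < bs f := by
  obtain ⟨x, -, hx⟩ := exists_mem_eq_sup univ univ_nonempty (bsAt (restrict f M α))
  rw [bs, hx]
  exact (bsAt_restrict_lt (hM _)).trans_le (le_sup (mem_univ _))

end BF

/-- restricting all the variables of a maximum-degree monomial of `f`
decreases block sensitivity. -/
theorem stmt8 {n : ℕ} (f : (Fin n → Bool) → Bool) (M : Finset (Fin n))
    (hM : coeffS (fun x => bval (f x)) M ≠ 0) (hMd : M.card = degB f)
    (α : Fin n → Bool) :
    bs (restrict f M α) ≤ bs f - 1 := by
  have hderiv := cubeDeriv_eq_coeffS_of_card_eq_degF hMd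
  rcases M.eq_empty_or_nonempty with rfl | hne
  · have hconst : ∀ x y, f x = f y := fun x y => bval_injective <| by
      rw [← cubeDeriv_empty (fun x => bval (f x)) x, ← cubeDeriv_empty (fun x => bval (f x)) y,
        hderiv, hderiv]
    rw [restrict_empty, bs_eq_zero_of_forall_eq hconst]
  · have hsens : ∀ y, ∃ B ⊆ M, f (flipS y B) ≠ f y := fun y =>
      exists_flipS_ne_of_cubeDeriv_ne_zero hne (hderiv y ▸ hM)
    have := bs_restrict_lt hsens α
    omega
end

section
/- Let f : {0,1}^n → {0,1} and suppose coordinate i is relevant for f but irrelevant for the restriction f_{j=0} (j ≠ i). Then deg_i(f_{j=1}) = deg_i(f) − 1, where deg_i(g) := deg(g(x) − g(x^i)). -/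
open Finset
open scoped Classical

open BF

/-- the coordinate degree `deg_i(g) := deg(g(x) − g(x⊕e_i))`. -/
noncomputable def degi {n : ℕ} (g : (Fin n → Bool) → Bool) (i : Fin n) : ℕ :=
  degF (fun x => bval (g x) - bval (g (flip1 x i)))


/-! The multilinear expansion of `Δ_i f := f(x) − f(x^i)` is `x_j · Δ_i f_{j=1}`: irrelevance
of `i` for `f_{j=0}` makes `Δ_i f` vanish on `x_j = 0`, and `Δ_i f_{j=1}` does not depend on
`x_j`. So the monomials of `Δ_i f` are exactly those of `Δ_i f_{j=1}` multiplied by `x_j`, and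
the degree drops by one. -/

open Function

namespace BF

variable {n : ℕ}

lemma update_indicator_true (T : Finset (Fin n)) (j : Fin n) :
    update (fun k => decide (k ∈ T)) j true = fun k => decide (k ∈ insert j T) := by
  funext k
  by_cases hk : k = j <;> simp [hk]

lemma update_indicator_false {T : Finset (Fin n)} {j : Fin n} (hjT : j ∉ T) :
    update (fun k => decide (k ∈ T)) j false = fun k => decide (k ∈ T) := by
  funext k
  by_cases hk : k = j <;> simp [hk, hjT]

lemma exists_coeffS_ne_zero {F : (Fin n → Bool) → ℝ} {x : Fin n → Bool} (hx : F x ≠ 0) :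
    ∃ S, coeffS F S ≠ 0 := by
  by_contra! hcoeff
  have hvanish : ∀ S : Finset (Fin n), F (fun k => decide (k ∈ S)) = 0 := by
    intro S
    induction S using Finset.strongInduction with
    | _ S ih =>
      have hS := hcoeff S
      rw [coeffS, ← Finset.add_sum_erase _ _ (Finset.mem_powerset_self S),
        Finset.sum_eq_zero fun T hT => ?_] at hS
      · simpa using hS
      · obtain ⟨hne, hsub⟩ := Finset.mem_erase.1 hT
        rw [ih T (lt_of_le_of_ne (Finset.mem_powerset.1 hsub) hne), mul_zero]
  have hx_eq : x = fun k => decide (k ∈ Finset.univ.filter fun k => x k = true) := by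
    funext k
    simp
  exact hx (hx_eq ▸ hvanish _)

lemma coeffS_comp_update_false (F : (Fin n → Bool) → ℝ) {j : Fin n} {S : Finset (Fin n)}
    (hjS : j ∉ S) : coeffS (fun x => F (update x j false)) S = coeffS F S := by
  refine Finset.sum_congr rfl fun T hT => ?_
  dsimp only
  rw [update_indicator_false fun hjT => hjS (Finset.mem_powerset.1 hT hjT)]

lemma coeffS_insert (F : (Fin n → Bool) → ℝ) {j : Fin n} {S : Finset (Fin n)} (hjS : j ∉ S) :
    coeffS F (insert j S) =
      coeffS (fun x => F (update x j true)) S - coeffS (fun x => F (update x j false)) S := by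
  simp only [coeffS]
  rw [Finset.sum_powerset_insert hjS, add_comm, sub_eq_add_neg, ← Finset.sum_neg_distrib]
  congr 1 <;> refine Finset.sum_congr rfl fun T hT => ?_
  · have hjT : j ∉ T := fun h => hjS (Finset.mem_powerset.1 hT h)
    rw [Finset.card_insert_of_notMem hjS, Finset.card_insert_of_notMem hjT,
      Nat.add_sub_add_right, update_indicator_true]
  · have hTS : T.card ≤ S.card := Finset.card_le_card (Finset.mem_powerset.1 hT)
    rw [Finset.card_insert_of_notMem hjS,
      update_indicator_false fun h => hjS (Finset.mem_powerset.1 hT h),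
      Nat.sub_add_comm hTS, pow_succ]
    ring

lemma coeffS_eq_zero_of_notMem {F : (Fin n → Bool) → ℝ} {j : Fin n}
    (hF : ∀ x, x j = false → F x = 0) {S : Finset (Fin n)} (hjS : j ∉ S) : coeffS F S = 0 := by
  rw [← coeffS_comp_update_false F hjS]
  simp [coeffS, hF]

lemma coeffS_comp_update_true_of_mem (F : (Fin n → Bool) → ℝ) {j : Fin n} {S : Finset (Fin n)}
    (hjS : j ∈ S) : coeffS (fun x => F (update x j true)) S = 0 := by
  rw [← Finset.insert_erase hjS, coeffS_insert _ (Finset.notMem_erase j S)]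
  simp only [update_idem, sub_self]

lemma coeffS_insert_of_vanish {F : (Fin n → Bool) → ℝ} {j : Fin n}
    (hF : ∀ x, x j = false → F x = 0) {S : Finset (Fin n)} (hjS : j ∉ S) :
    coeffS F (insert j S) = coeffS (fun x => F (update x j true)) S := by
  have hF_false : (fun x => F (update x j false)) = 0 := funext fun x => hF _ (by simp)
  rw [coeffS_insert F hjS, hF_false]
  simp [coeffS]

theorem degF_eq_degF_comp_update_true_add_one {F : (Fin n → Bool) → ℝ} {j : Fin n}
    (hF : ∀ x, x j = false → F x = 0) (hF_ne : ∃ x, F x ≠ 0) :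
    degF F = degF (fun x => F (update x j true)) + 1 := by
  set G : (Fin n → Bool) → ℝ := fun x => F (update x j true)
  set B := Finset.univ.filter fun S => coeffS G S ≠ 0
  have hjB : ∀ S ∈ B, j ∉ S := fun S hS hjS =>
    (Finset.mem_filter.1 hS).2 (coeffS_comp_update_true_of_mem F hjS)
  have hsupport : (Finset.univ.filter fun S => coeffS F S ≠ 0) = B.image (insert j) := by
    ext S
    simp only [B, Finset.mem_filter, Finset.mem_univ, true_and, Finset.mem_image]
    constructor
    · intro hS
      have hjS : j ∈ S := by_contra fun hjS => hS (coeffS_eq_zero_of_notMem hF hjS)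
      refine ⟨S.erase j, ?_, Finset.insert_erase hjS⟩
      rwa [← coeffS_insert_of_vanish hF (Finset.notMem_erase j S), Finset.insert_erase hjS]
    · rintro ⟨T, hT, rfl⟩
      have hjT : j ∉ T := fun hjT => hT (coeffS_comp_update_true_of_mem F hjT)
      rwa [coeffS_insert_of_vanish hF hjT]
  have hB : B.Nonempty := by
    obtain ⟨x, hx⟩ := hF_ne
    obtain ⟨S, hS⟩ := exists_coeffS_ne_zero hx
    have hS_mem : S ∈ B.image (insert j) := by
      rw [← hsupport]
      simpa using hS
    obtain ⟨T, hT, -⟩ := Finset.mem_image.1 hS_mem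
    exact ⟨T, hT⟩
  calc degF F = B.sup fun S => (insert j S).card := by
        rw [degF, hsupport, Finset.sup_image]
        rfl
    _ = B.sup fun S => S.card + 1 :=
        Finset.sup_congr rfl fun S hS => Finset.card_insert_of_notMem (hjB S hS)
    _ = degF G + 1 := (Finset.sup_add hB _ 1).symm

lemma restrict_singleton (f : (Fin n → Bool) → Bool) (j : Fin n) (α : Fin n → Bool) :
    restrict f {j} α = fun x => f (update x j (α j)) := by
  funext x
  simp only [restrict]
  congr 1
  funext k
  by_cases hk : k = j <;> simp [hk]

lemma flip1_update_of_ne (x : Fin n → Bool) {i j : Fin n} (hji : j ≠ i) (b : Bool) :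
    flip1 (update x j b) i = update (flip1 x i) j b := by
  funext k
  by_cases hkj : k = j
  · subst hkj
    simp [flip1, hji]
  · simp [flip1, hkj]

lemma bval_sub_bval_ne_zero {a b : Bool} (h : a ≠ b) : bval a - bval b ≠ 0 := by
  cases a <;> cases b <;> simp_all [bval]

end BF

/-- if `i` is relevant for `f` but irrelevant for `f_{j=0}` (`j ≠ i`),
then `deg_i(f_{j=1}) = deg_i(f) − 1`. -/
theorem stmt10 {n : ℕ} (f : (Fin n → Bool) → Bool) (i j : Fin n) (hij : j ≠ i)
    (hrel : Rel i f)
    (h0 : ¬ Rel i (restrict f {j} (fun _ => false))) :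
    degi (restrict f {j} (fun _ => true)) i = degi f i - 1 := by
  set Δf : (Fin n → Bool) → ℝ := fun x => bval (f x) - bval (f (flip1 x i))
  have hvanish : ∀ x, x j = false → Δf x = 0 := by
    intro x hxj
    have hflip := not_exists_not.1 h0 x
    simp only [restrict_singleton, ← flip1_update_of_ne x hij, ← hxj, update_eq_self] at hflip
    simp [Δf, hflip]
  have hΔf_ne : ∃ x, Δf x ≠ 0 := by
    obtain ⟨x, hx⟩ := hrel
    exact ⟨x, bval_sub_bval_ne_zero hx.symm⟩
  have hΔg : (fun x => bval (restrict f {j} (fun _ => true) x) -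
      bval (restrict f {j} (fun _ => true) (flip1 x i))) = fun x => Δf (update x j true) := by
    funext x
    simp only [restrict_singleton, flip1_update_of_ne x hij, Δf]
  rw [degi, degi, hΔg, degF_eq_degF_comp_update_true_add_one hvanish hΔf_ne, Nat.add_sub_cancel]
end

section
/- Let f : {0,1}^n → {0,1}, let i be a coordinate, and let j ≠ i be another coordinate. Define sens_i(g) := max over x with g(x) ≠ g(x^i) of s_x(g) + s_{x^i}(g). If i is relevant for f and irrelevant for f_{j=0}, then sens_i(f_{j=1}) ≤ sens_i(f) − 1. -/
open Finset
open scoped Classical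

open BF

/-- the coordinate sensitivity `sens_i(g) := max_{x : g(x) ≠ g(x⊕e_i)} s_x(g) + s_{x⊕e_i}(g)`
(equal to `0` when `i` is irrelevant). -/
noncomputable def sensi {n : ℕ} (g : (Fin n → Bool) → Bool) (i : Fin n) : ℕ :=
  (Finset.univ.filter fun x : Fin n → Bool => g x ≠ g (flip1 x i)).sup
    (fun x => sx g x + sx g (flip1 x i))

/-- if `i` is relevant for `f` but irrelevant for `f_{j=0}` (`j ≠ i`),
then `sens_i(f_{j=1}) ≤ sens_i(f) − 1`. -/
theorem stmt11 {n : ℕ} (f : (Fin n → Bool) → Bool) (i j : Fin n) (hij : j ≠ i)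
    (hrel : Rel i f)
    (h0 : ¬ Rel i (restrict f {j} (fun _ => false))) :
    sensi (restrict f {j} (fun _ => true)) i ≤ sensi f i - 1 := by
  classical
  set F1 := restrict f {j} (fun _ => true) with hF1def
  set F0 := restrict f {j} (fun _ => false) with hF0def
  set Y : (Fin n → Bool) → (Fin n → Bool) := fun x k => if k = j then true else x k with hY
  have hYflip : ∀ (x : Fin n → Bool) (k : Fin n), k ≠ j → Y (flip1 x k) = flip1 (Y x) k := by
    intro x k hk
    funext l
    simp only [hY, flip1]
    by_cases h1 : l = j
    · have hlk : ¬ (l = k) := fun h => hk (h ▸ h1)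
      simp [h1, hlk, Ne.symm hk]
    · by_cases h2 : l = k <;> simp [h1, h2, hk]
  have hF1 : ∀ x, F1 x = f (Y x) := by
    intro x
    simp only [hF1def, BF.restrict, hY]
    congr 1; funext l
    by_cases h : l = j <;> simp [h]
  have hF0 : ∀ x, F0 x = f (flip1 (Y x) j) := by
    intro x
    simp only [hF0def, BF.restrict]
    congr 1; funext l
    simp only [flip1, hY]
    by_cases h : l = j <;> simp [h]
  -- irrelevance of i for F0
  have h0' : ∀ x, F0 (flip1 x i) = F0 x := by
    intro x
    by_contra h
    exact h0 ⟨x, h⟩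
  -- the sensitive set of F1 at x is contained in that of f at Y x
  have hsub : ∀ x : Fin n → Bool,
      (Finset.univ.filter fun k => F1 (flip1 x k) ≠ F1 x)
        ⊆ (Finset.univ.filter fun k => f (flip1 (Y x) k) ≠ f (Y x)) := by
    intro x k hk
    simp only [Finset.mem_filter, Finset.mem_univ, true_and] at hk ⊢
    have hkj : k ≠ j := by
      intro h
      subst h
      apply hk
      rw [hF1, hF1]
      congr 1
      funext l
      simp only [hY, flip1]
      by_cases h : l = k <;> simp [h]
    rw [hF1, hF1, hYflip x k hkj] at hk
    exact hk
  have hjnot : ∀ x : Fin n → Bool,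
      j ∉ (Finset.univ.filter fun k => F1 (flip1 x k) ≠ F1 x) := by
    intro x hx
    simp only [Finset.mem_filter, Finset.mem_univ, true_and] at hx
    apply hx
    rw [hF1, hF1]
    congr 1
    funext l
    simp only [hY, flip1]
    by_cases h : l = j <;> simp [h]
  -- weak bound
  have hweak : ∀ x, sx F1 x ≤ sx f (Y x) :=
    fun x => Finset.card_le_card (hsub x)
  -- strong bound when f is j-sensitive at Y x
  have hstrong : ∀ x, F1 x ≠ F0 x → sx F1 x + 1 ≤ sx f (Y x) := by
    intro x hx
    have hj : j ∈ (Finset.univ.filter fun k => f (flip1 (Y x) k) ≠ f (Y x)) := by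
      simp only [Finset.mem_filter, Finset.mem_univ, true_and]
      intro h
      apply hx
      rw [hF1, hF0, h]
    have hins : insert j (Finset.univ.filter fun k => F1 (flip1 x k) ≠ F1 x)
        ⊆ (Finset.univ.filter fun k => f (flip1 (Y x) k) ≠ f (Y x)) := by
      intro k hk
      rcases Finset.mem_insert.mp hk with h | h
      · exact h ▸ hj
      · exact hsub x h
    calc sx F1 x + 1
        = (insert j (Finset.univ.filter fun k => F1 (flip1 x k) ≠ F1 x)).card := by
          rw [Finset.card_insert_of_notMem (hjnot x)]; rfl
      _ ≤ _ := Finset.card_le_card hins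
  have hij' : i ≠ j := fun h => hij (h ▸ rfl)
  -- main per-point bound
  rw [sensi]
  apply Finset.sup_le
  intro x hx
  simp only [Finset.mem_filter, Finset.mem_univ, true_and] at hx
  have hYw : f (Y x) ≠ f (flip1 (Y x) i) := by
    rw [← hYflip x i hij', ← hF1, ← hF1]
    exact hx
  have hmem : Y x ∈ (Finset.univ.filter
      fun z : Fin n → Bool => f z ≠ f (flip1 z i)) := by
    simp only [Finset.mem_filter, Finset.mem_univ, true_and]
    exact hYw
  have hle : sx f (Y x) + sx f (flip1 (Y x) i) ≤ sensi f i :=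
    Finset.le_sup (f := fun z => sx f z + sx f (flip1 z i)) hmem
  have hcase : F1 x ≠ F0 x ∨ F1 (flip1 x i) ≠ F0 (flip1 x i) := by
    by_contra h
    push_neg at h
    obtain ⟨h1, h2⟩ := h
    apply hx
    rw [h1, h2, h0' x]
  have key : sx F1 x + sx F1 (flip1 x i) + 1 ≤ sx f (Y x) + sx f (flip1 (Y x) i) := by
    rw [← hYflip x i hij']
    rcases hcase with h | h
    · have := hstrong x h
      have := hweak (flip1 x i)
      omega
    · have := hstrong (flip1 x i) h
      have := hweak x
      omega
  omega
end

section
/- Let m_i be an i-coordinate measure satisfying: (1) m_i(f_{j=b}) ≤ m_i(f) for all j ≠ i and b ∈ {0,1}; and (2) if i is relevant for f but irrelevant for f_{j=b}, then m_i(f_{j=1−b}) ≤ m_i(f) − 1. Then for any j ≠ i, δ_i(f)·2^{−m_i(f)} ≤ (δ_i(f_{j=0})·2^{−m_i(f_{j=0})} + δ_i(f_{j=1})·2^{−m_i(f_{j=1})}) / 2, where δ_i(g) is 1 if coordinate i is relevant for g and 0 otherwise. -/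
open Finset
open scoped Classical

open BF

/-- the indicator `δ_i(g)` of relevance of coordinate `i`. -/
noncomputable def delta {n : ℕ} (i : Fin n) (g : (Fin n → Bool) → Bool) : ℝ :=
  if Rel i g then 1 else 0


private lemma rel_restrict_of_rel {n : ℕ} (i j : Fin n) (hj : j ≠ i)
    (f : (Fin n → Bool) → Bool) (hf : Rel i f) :
    Rel i (restrict f {j} (fun _ => false)) ∨ Rel i (restrict f {j} (fun _ => true)) := by
  obtain ⟨x, hx⟩ := hf
  have key : ∀ y : Fin n → Bool, y j = x j →
      restrict f {j} (fun _ => x j) y = f y := by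
    intro y hy
    unfold BF.restrict
    congr 1
    funext k
    by_cases hk : k = j <;> simp [hk, hy]
  have hflip : (flip1 x i) j = x j := by
    simp [flip1, hj]
  have : Rel i (restrict f {j} (fun _ => x j)) := by
    exact ⟨x, by rw [key _ hflip, key _ rfl]; exact hx⟩
  cases hb : x j
  · left; rwa [hb] at this
  · right; rwa [hb] at this

/-- the base averaging inequality for restriction-reducing
`i`-coordinate measures (Fact 3.3). -/
theorem stmt12 {n : ℕ} (i : Fin n) (m : ((Fin n → Bool) → Bool) → ℝ)
    (hmeas : ∀ g : (Fin n → Bool) → Bool, ¬ Rel i g → m g = 0)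
    (h1 : ∀ g : (Fin n → Bool) → Bool, ∀ j : Fin n, j ≠ i → ∀ b : Bool,
      m (restrict g {j} (fun _ => b)) ≤ m g)
    (h2 : ∀ g : (Fin n → Bool) → Bool, ∀ j : Fin n, j ≠ i → ∀ b : Bool,
      Rel i g → ¬ Rel i (restrict g {j} (fun _ => b)) →
      m (restrict g {j} (fun _ => !b)) ≤ m g - 1)
    (f : (Fin n → Bool) → Bool) (j : Fin n) (hj : j ≠ i) :
    delta i f * (2 : ℝ) ^ (-(m f)) ≤
      (delta i (restrict f {j} (fun _ => false)) *
          (2 : ℝ) ^ (-(m (restrict f {j} (fun _ => false)))) +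
        delta i (restrict f {j} (fun _ => true)) *
          (2 : ℝ) ^ (-(m (restrict f {j} (fun _ => true))))) / 2 := by
  set g0 := restrict f {j} (fun _ => false) with hg0
  set g1 := restrict f {j} (fun _ => true) with hg1
  by_cases hf : Rel i f
  swap
  · have : delta i f = 0 := by simp [delta, hf]
    rw [this, zero_mul]
    have p0 : (0:ℝ) ≤ delta i g0 * (2:ℝ) ^ (-(m g0)) := by
      apply mul_nonneg
      · unfold delta; split <;> norm_num
      · positivity
    have p1 : (0:ℝ) ≤ delta i g1 * (2:ℝ) ^ (-(m g1)) := by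
      apply mul_nonneg
      · unfold delta; split <;> norm_num
      · positivity
    linarith
  have hdf : delta i f = 1 := by simp [delta, hf]
  rw [hdf, one_mul]
  have hone : (1:ℝ) ≤ 2 := by norm_num
  by_cases hr0 : Rel i g0 <;> by_cases hr1 : Rel i g1
  · have hd0 : delta i g0 = 1 := by simp [delta, hr0]
    have hd1 : delta i g1 = 1 := by simp [delta, hr1]
    rw [hd0, hd1, one_mul, one_mul]
    have m0 : m g0 ≤ m f := h1 f j hj false
    have m1 : m g1 ≤ m f := h1 f j hj true
    have e0 : (2:ℝ) ^ (-(m f)) ≤ (2:ℝ) ^ (-(m g0)) :=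
      Real.rpow_le_rpow_of_exponent_le hone (by linarith)
    have e1 : (2:ℝ) ^ (-(m f)) ≤ (2:ℝ) ^ (-(m g1)) :=
      Real.rpow_le_rpow_of_exponent_le hone (by linarith)
    linarith
  · have hd0 : delta i g0 = 1 := by simp [delta, hr0]
    have hd1 : delta i g1 = 0 := by simp [delta, hr1]
    rw [hd0, hd1, one_mul, zero_mul, add_zero]
    have hm := h2 f j hj true hf hr1
    simp only [Bool.not_true] at hm
    rw [← hg0] at hm
    have e0 : (2:ℝ) ^ (-(m f) + 1) ≤ (2:ℝ) ^ (-(m g0)) :=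
      Real.rpow_le_rpow_of_exponent_le hone (by linarith)
    rw [Real.rpow_add (by norm_num), Real.rpow_one] at e0
    linarith
  · have hd1 : delta i g1 = 1 := by simp [delta, hr1]
    have hd0 : delta i g0 = 0 := by simp [delta, hr0]
    rw [hd1, hd0, one_mul, zero_mul, zero_add]
    have hm := h2 f j hj false hf hr0
    simp only [Bool.not_false] at hm
    rw [← hg1] at hm
    have e1 : (2:ℝ) ^ (-(m f) + 1) ≤ (2:ℝ) ^ (-(m g1)) :=
      Real.rpow_le_rpow_of_exponent_le hone (by linarith)
    rw [Real.rpow_add (by norm_num), Real.rpow_one] at e1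
    linarith
  · exact absurd (rel_restrict_of_rel i j hj f hf) (by rw [← hg0, ← hg1]; tauto)
end

section
/- Let m_i be a restriction-reducing i-coordinate measure (satisfying properties (1) and (2) of Fact 3.3's hypotheses), and suppose min{m_i(x ↦ x_i), m_i(x ↦ ¬x_i)} = r. Then for every boolean function f, δ_i(f)·2^{−m_i(f)} ≤ 2^{−r}·Inf_i[f]. -/
open Finset
open scoped Classical

open BF

/- Induct on the number of relevant variables. If some `j ≠ i` is relevant, the
two restrictions `x_j := b` have fewer relevant variables; the properties of `m` give
`δ_i(f)·2^{-m(f)} ≤ avg_b δ_i(f_b)·2^{-m(f_b)}` (when only one restriction keeps `i` relevant,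
its measure drops by one, which pays for the factor `1/2`), while `Inf_i[f] = avg_b Inf_i[f_b]`.
Otherwise `f` depends on `x_i` alone, so it is the dictator or the anti-dictator. -/

namespace BF

open Function

variable {n : ℕ}

/-- Properties (1) and (2) of a restriction-reducing `i`-coordinate measure. -/
structure IsRestrictionReducing (i : Fin n) (m : ((Fin n → Bool) → Bool) → ℝ) : Prop where
  restrict_le : ∀ g : (Fin n → Bool) → Bool, ∀ j : Fin n, j ≠ i → ∀ b : Bool,
    m (restrict g {j} fun _ => b) ≤ m g
  restrict_le_sub_one : ∀ g : (Fin n → Bool) → Bool, ∀ j : Fin n, j ≠ i → ∀ b : Bool,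
    Rel i g → ¬ Rel i (restrict g {j} fun _ => b) → m (restrict g {j} fun _ => !b) ≤ m g - 1

theorem flip1_eq_update (x : Fin n → Bool) (j : Fin n) : flip1 x j = update x j (!x j) := by
  ext k
  by_cases hk : k = j <;> simp [flip1, hk]

theorem flip1_involutive (j : Fin n) : Involutive fun x : Fin n → Bool => flip1 x j := by
  intro x
  simp only [flip1_eq_update, update_idem, update_self, Bool.not_not, update_eq_self]

theorem update_flip1_of_ne {i j : Fin n} (hji : j ≠ i) (x : Fin n → Bool) (b : Bool) :
    update (flip1 x i) j b = flip1 (update x j b) i := by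
  rw [flip1_eq_update, flip1_eq_update, update_of_ne hji.symm, update_comm hji]

theorem restrict_singleton_apply (f : (Fin n → Bool) → Bool) (j : Fin n) (b : Bool)
    (x : Fin n → Bool) : restrict f {j} (fun _ => b) x = f (update x j b) := by
  simp only [restrict, Finset.mem_singleton]
  congr 1
  ext k
  by_cases hk : k = j <;> simp [hk]

theorem restrict_singleton_apply_of_eq (f : (Fin n → Bool) → Bool) {j : Fin n} {b : Bool}
    {x : Fin n → Bool} (hx : x j = b) : restrict f {j} (fun _ => b) x = f x := by
  rw [restrict_singleton_apply, ← hx, update_eq_self]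

theorem not_rel_restrict_singleton (f : (Fin n → Bool) → Bool) (j : Fin n) (b : Bool) :
    ¬ Rel j (restrict f {j} fun _ => b) := by
  rintro ⟨x, hx⟩
  simp only [restrict_singleton_apply, flip1_eq_update, update_idem] at hx
  exact hx rfl

theorem Rel.of_restrict_singleton {f : (Fin n → Bool) → Bool} {j k : Fin n} {b : Bool}
    (h : Rel k (restrict f {j} fun _ => b)) : Rel k f := by
  obtain rfl | hkj := eq_or_ne k j
  · exact absurd h (not_rel_restrict_singleton f k b)
  obtain ⟨x, hx⟩ := h
  refine ⟨update x j b, ?_⟩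
  rwa [restrict_singleton_apply, restrict_singleton_apply, update_flip1_of_ne hkj.symm] at hx

theorem exists_rel_restrict_singleton {f : (Fin n → Bool) → Bool} {i j : Fin n} (hji : j ≠ i)
    (h : Rel i f) : ∃ b, Rel i (restrict f {j} fun _ => b) := by
  obtain ⟨x, hx⟩ := h
  have hxj : flip1 x i j = x j := by simp [flip1, hji]
  refine ⟨x j, x, ?_⟩
  rwa [restrict_singleton_apply_of_eq f rfl, restrict_singleton_apply_of_eq f hxj]

theorem nrel_restrict_singleton_lt {f : (Fin n → Bool) → Bool} {j : Fin n} (hj : Rel j f)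
    (b : Bool) : nrel (restrict f {j} fun _ => b) < nrel f := by
  have hsub : relSet (restrict f {j} fun _ => b) ⊆ relSet f := by
    intro k
    simpa [relSet] using Rel.of_restrict_singleton
  refine Finset.card_lt_card ((Finset.ssubset_iff_of_subset hsub).2 ⟨j, ?_, ?_⟩)
  · simpa [relSet] using hj
  · simpa [relSet] using not_rel_restrict_singleton f j b

theorem apply_update_of_not_rel {f : (Fin n → Bool) → Bool} {j : Fin n} (h : ¬ Rel j f)
    (x : Fin n → Bool) (b : Bool) : f (update x j b) = f x := by
  obtain rfl | hb := eq_or_ne b (x j)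
  · rw [update_eq_self]
  · rw [Bool.eq_not.2 hb, ← flip1_eq_update]
    by_contra hne
    exact h ⟨x, hne⟩

theorem apply_eq_of_forall_not_rel {f : (Fin n → Bool) → Bool} (s : Finset (Fin n))
    (hs : ∀ j ∈ s, ¬ Rel j f) {x y : Fin n → Bool} (hxy : ∀ k ∉ s, x k = y k) : f x = f y := by
  induction s using Finset.induction_on generalizing x with
  | empty => exact congrArg f (funext fun k => hxy k (Finset.notMem_empty k))
  | insert a s _ ih =>
    rw [← apply_update_of_not_rel (hs a (Finset.mem_insert_self a s)) x (y a)]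
    refine ih (fun j hj => hs j (Finset.mem_insert_of_mem hj)) fun k hk => ?_
    by_cases hka : k = a
    · simp [hka]
    · simpa [hka] using hxy k (by simp [hka, hk])

theorem eq_dictator_or_antidictator {f : (Fin n → Bool) → Bool} {i : Fin n} (hi : Rel i f)
    (hother : ∀ j, j ≠ i → ¬ Rel j f) : (f = fun x => x i) ∨ (f = fun x => !x i) := by
  have hf : ∀ x, f x = f fun _ => x i := fun x =>
    apply_eq_of_forall_not_rel (Finset.univ.erase i) (by simpa using hother)
      (by simp +contextual)
  have hne : f (fun _ => true) ≠ f fun _ => false := by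
    obtain ⟨x, hx⟩ := hi
    rw [hf x, hf (flip1 x i), show flip1 x i i = !x i by simp [flip1]] at hx
    revert hx
    cases x i
    exacts [id, Ne.symm]
  cases ht : f (fun _ => true) <;> cases hf0 : f (fun _ => false) <;>
    simp only [ht, hf0, ne_eq, not_true_eq_false] at hne
  · right; ext x; rw [hf x]; cases x i <;> simp [ht, hf0]
  · left; ext x; rw [hf x]; cases x i <;> simp [ht, hf0]

theorem infl_eq_sum (f : (Fin n → Bool) → Bool) (i : Fin n) :
    infl f i = (∑ x, if f x ≠ f (flip1 x i) then (1 : ℝ) else 0) / 2 ^ n := by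
  rw [infl, Finset.natCast_card_filter]

theorem infl_nonneg (f : (Fin n → Bool) → Bool) (i : Fin n) : 0 ≤ infl f i := by
  unfold infl
  positivity

theorem infl_eq_one_of_forall_ne {f : (Fin n → Bool) → Bool} {i : Fin n}
    (h : ∀ x, f x ≠ f (flip1 x i)) : infl f i = 1 := by
  simp [infl_eq_sum, h]

theorem sum_update_false_add_sum_update_true {M : Type*} [AddCommMonoid M]
    (φ : (Fin n → Bool) → M) (j : Fin n) :
    ∑ x, φ (update x j false) + ∑ x, φ (update x j true) = 2 • ∑ x, φ x := by
  have hflip : ∑ x, φ (flip1 x j) = ∑ x, φ x :=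
    Equiv.sum_comp (Involutive.toPerm _ (flip1_involutive j)) φ
  rw [two_nsmul]
  nth_rw 2 [← hflip]
  rw [← Finset.sum_add_distrib, ← Finset.sum_add_distrib]
  refine Finset.sum_congr rfl fun x _ => ?_
  cases hx : x j
  · rw [← hx, update_eq_self, flip1_eq_update, hx, Bool.not_false]
  · rw [← hx, update_eq_self, flip1_eq_update, hx, Bool.not_true, add_comm]

theorem infl_restrict_singleton_add (f : (Fin n → Bool) → Bool) {i j : Fin n} (hji : j ≠ i) :
    infl (restrict f {j} fun _ => false) i + infl (restrict f {j} fun _ => true) i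
      = 2 * infl f i := by
  simp only [infl_eq_sum, restrict_singleton_apply, update_flip1_of_ne hji]
  rw [← add_div, sum_update_false_add_sum_update_true
    (fun y => if f y ≠ f (flip1 y i) then (1 : ℝ) else 0), nsmul_eq_mul]
  ring

theorem delta_nonneg (i : Fin n) (g : (Fin n → Bool) → Bool) : 0 ≤ delta i g := by
  unfold delta
  split_ifs <;> norm_num

theorem delta_mul_rpow_le_avg_restrict {i j : Fin n} {m : ((Fin n → Bool) → Bool) → ℝ}
    (hm : IsRestrictionReducing i m) (hji : j ≠ i) (f : (Fin n → Bool) → Bool) :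
    delta i f * 2 ^ (-m f) ≤
      (delta i (restrict f {j} fun _ => false) * 2 ^ (-m (restrict f {j} fun _ => false)) +
        delta i (restrict f {j} fun _ => true) * 2 ^ (-m (restrict f {j} fun _ => true))) / 2 := by
  have hpos : ∀ g, 0 ≤ delta i g * (2 : ℝ) ^ (-m g) := fun g =>
    mul_nonneg (delta_nonneg i g) (Real.rpow_nonneg zero_le_two _)
  by_cases hi : Rel i f
  swap
  · rw [delta, if_neg hi, zero_mul]
    linarith [hpos (restrict f {j} fun _ => false), hpos (restrict f {j} fun _ => true)]
  have hmono : ∀ b, (2 : ℝ) ^ (-m f) ≤ 2 ^ (-m (restrict f {j} fun _ => b)) := fun b =>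
    Real.rpow_le_rpow_of_exponent_le one_le_two (neg_le_neg (hm.restrict_le f j hji b))
  have hdrop : ∀ b, ¬ Rel i (restrict f {j} fun _ => b) →
      2 * (2 : ℝ) ^ (-m f) ≤ 2 ^ (-m (restrict f {j} fun _ => !b)) := fun b hb => by
    calc 2 * (2 : ℝ) ^ (-m f) = 2 ^ (-(m f - 1)) := by
          rw [show -(m f - 1) = -m f + 1 by ring, Real.rpow_add_one two_ne_zero]; ring
      _ ≤ _ := Real.rpow_le_rpow_of_exponent_le one_le_two
          (neg_le_neg (hm.restrict_le_sub_one f j hji b hi hb))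
  rw [delta, if_pos hi, one_mul]
  by_cases h0 : Rel i (restrict f {j} fun _ => false)
  · by_cases h1 : Rel i (restrict f {j} fun _ => true)
    · simp only [delta, if_pos h0, if_pos h1, one_mul]
      linarith [hmono false, hmono true]
    · have := hdrop true h1
      simp only [Bool.not_true] at this
      simp only [delta, if_pos h0, if_neg h1, one_mul, zero_mul, add_zero]
      linarith
  · have h1 : Rel i (restrict f {j} fun _ => true) := by
      obtain ⟨b, hb⟩ := exists_rel_restrict_singleton hji hi
      cases b
      exacts [absurd hb h0, hb]
    have := hdrop false h0
    simp only [Bool.not_false] at this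
    simp only [delta, if_neg h0, if_pos h1, one_mul, zero_mul, zero_add]
    linarith

theorem delta_mul_rpow_le_rpow_mul_infl {i : Fin n} {m : ((Fin n → Bool) → Bool) → ℝ}
    (hm : IsRestrictionReducing i m) (f : (Fin n → Bool) → Bool) :
    delta i f * 2 ^ (-m f) ≤ 2 ^ (-min (m fun x => x i) (m fun x => !x i)) * infl f i := by
  set c : ℝ := 2 ^ (-min (m fun x => x i) (m fun x => !x i))
  by_cases hother : ∃ j, j ≠ i ∧ Rel j f
  · obtain ⟨j, hji, hj⟩ := hother
    have ih : ∀ b, delta i (restrict f {j} fun _ => b) * 2 ^ (-m (restrict f {j} fun _ => b))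
        ≤ c * infl (restrict f {j} fun _ => b) i := fun b =>
      delta_mul_rpow_le_rpow_mul_infl hm (restrict f {j} fun _ => b)
    calc delta i f * 2 ^ (-m f)
        ≤ _ := delta_mul_rpow_le_avg_restrict hm hji f
      _ ≤ (c * infl (restrict f {j} fun _ => false) i
          + c * infl (restrict f {j} fun _ => true) i) / 2 := by
          linarith [ih false, ih true]
      _ = c * infl f i := by
          rw [← mul_add, infl_restrict_singleton_add f hji]; ring
  push Not at hother
  by_cases hi : Rel i f
  · rw [delta, if_pos hi, one_mul]
    rcases eq_dictator_or_antidictator hi hother with rfl | rfl <;>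
    · rw [infl_eq_one_of_forall_ne (by simp [flip1]), mul_one]
      exact Real.rpow_le_rpow_of_exponent_le one_le_two (neg_le_neg (by simp))
  · simp only [delta, if_neg hi, zero_mul]
    exact mul_nonneg (Real.rpow_nonneg zero_le_two _) (infl_nonneg f i)
termination_by nrel f
decreasing_by exact nrel_restrict_singleton_lt hj _

end BF

theorem stmt13_general {n : ℕ} (i : Fin n) (m : ((Fin n → Bool) → Bool) → ℝ)
    (h1 : ∀ g : (Fin n → Bool) → Bool, ∀ j : Fin n, j ≠ i → ∀ b : Bool,
      m (restrict g {j} (fun _ => b)) ≤ m g)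
    (h2 : ∀ g : (Fin n → Bool) → Bool, ∀ j : Fin n, j ≠ i → ∀ b : Bool,
      Rel i g → ¬ Rel i (restrict g {j} (fun _ => b)) →
      m (restrict g {j} (fun _ => !b)) ≤ m g - 1)
    (r : ℝ)
    (hr : r = min (m (fun x => x i)) (m (fun x => !(x i))))
    (f : (Fin n → Bool) → Bool) :
    delta i f * (2 : ℝ) ^ (-(m f)) ≤ (2 : ℝ) ^ (-r) * infl f i := by
  subst hr
  exact BF.delta_mul_rpow_le_rpow_mul_infl ⟨h1, h2⟩ f

/-- for a restriction-reducing `i`-coordinate measure `m` with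
`r = min{m(dictator_i), m(anti-dictator_i)}`, every `f` satisfies
`δ_i(f)·2^{−m(f)} ≤ 2^{−r}·Inf_i[f]`. -/
theorem stmt13 {n : ℕ} (i : Fin n) (m : ((Fin n → Bool) → Bool) → ℝ)
    (hmeas : ∀ g : (Fin n → Bool) → Bool, ¬ Rel i g → m g = 0)
    (h1 : ∀ g : (Fin n → Bool) → Bool, ∀ j : Fin n, j ≠ i → ∀ b : Bool,
      m (restrict g {j} (fun _ => b)) ≤ m g)
    (h2 : ∀ g : (Fin n → Bool) → Bool, ∀ j : Fin n, j ≠ i → ∀ b : Bool,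
      Rel i g → ¬ Rel i (restrict g {j} (fun _ => b)) →
      m (restrict g {j} (fun _ => !b)) ≤ m g - 1)
    (r : ℝ)
    (hr : r = min (m (fun x => x i)) (m (fun x => !(x i))))
    (f : (Fin n → Bool) → Bool) :
    delta i f * (2 : ℝ) ^ (-(m f)) ≤ (2 : ℝ) ^ (-r) * infl f i :=
  stmt13_general i m h1 h2 r hr f
end
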